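/- arXiv:1005.3970 — 11 statements merged into one kernel-verified Lean document; each statement's English description precedes it below -/
import Mathlib

section
/- Every non-Abelian quadratic Lie algebra (g,B) satisfies dim [g,g] ≥ 3, where [g,g] denotes the derived ideal of g. -/
/-!
In a quadratic Lie algebra the orthogonal of the derived ideal `[g, g]` is central, because
`B n ⁅y, z⁆ = B ⁅n, y⁆ z`. Hence the center `z` has codimension at most `dim [g, g]`. On the other
hand the bracket factors through an alternating map on `g ⧸ z`, so `dim [g, g] ≤ C(dim g ⧸ z, 2)`.
These bounds are compatible with `dim [g, g] ≤ 2` only when `[g, g] = 0`.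
-/

open Module Submodule

theorem Submodule.exists_fin_sup_span_range_eq_top {K V : Type*} [DivisionRing K]
    [AddCommGroup V] [Module K V] [FiniteDimensional K V] (Z : Submodule K V) :
    ∃ v : Fin (finrank K (V ⧸ Z)) → V, Z ⊔ span K (Set.range v) = ⊤ := by
  let b := finBasis K (V ⧸ Z)
  choose v hv using fun i => Z.mkQ_surjective (b i)
  refine ⟨v, ?_⟩
  rw [← comap_map_mkQ, map_span, ← Set.range_comp, show Z.mkQ ∘ v = b from funext hv,
    b.span_eq, comap_top]

namespace LieAlgebra

variable {K L : Type*} [Field K] [LieRing L] [LieAlgebra K L]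

lemma derivedSeries_one_toSubmodule_eq_span :
    (derivedSeries K L 1).toSubmodule = span K {⁅x, y⁆ | (x : L) (y : L)} := by
  rw [← LieIdeal.toLieSubalgebra_toSubmodule, coe_derivedSeries_one_eq]

lemma lie_mem_derivedSeries_one (x y : L) : ⁅x, y⁆ ∈ derivedSeries K L 1 := by
  rw [← LieSubmodule.mem_toSubmodule, derivedSeries_one_toSubmodule_eq_span]
  exact subset_span ⟨x, y, rfl⟩

lemma lie_eq_zero_of_finrank_derivedSeries_one_eq_zero [FiniteDimensional K L]
    (h : finrank K (derivedSeries K L 1) = 0) (x y : L) : ⁅x, y⁆ = 0 := by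
  have hbot : (derivedSeries K L 1).toSubmodule = ⊥ := Submodule.finrank_eq_zero.mp h
  have hxy := (derivedSeries K L 1).mem_toSubmodule.mpr (lie_mem_derivedSeries_one x y)
  rwa [hbot, mem_bot] at hxy

open Classical in
noncomputable def orderedBrackets {k : ℕ} (v : Fin k → L) : Finset L :=
  (Finset.univ.filter fun p : Fin k × Fin k => p.1 < p.2).image fun p => ⁅v p.1, v p.2⁆

lemma lie_mem_span_orderedBrackets {k : ℕ} (v : Fin k → L) (i j : Fin k) :
    ⁅v i, v j⁆ ∈ span K (orderedBrackets v : Set L) := by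
  classical
  have hmem : ∀ {a b : Fin k}, a < b → ⁅v a, v b⁆ ∈ span K (orderedBrackets v : Set L) :=
    fun hab => subset_span (Finset.mem_image.mpr ⟨(_, _), by simpa using hab, rfl⟩)
  rcases lt_trichotomy i j with hij | rfl | hji
  · exact hmem hij
  · simp
  · rw [← lie_skew]
    exact neg_mem (hmem hji)

lemma lie_mem_span_orderedBrackets_of_mem_span {k : ℕ} (v : Fin k → L) {x y : L}
    (hx : x ∈ span K (Set.range v)) (hy : y ∈ span K (Set.range v)) :
    ⁅x, y⁆ ∈ span K (orderedBrackets v : Set L) := by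
  obtain ⟨c, rfl⟩ := mem_span_range_iff_exists_fun K |>.mp hx
  obtain ⟨d, rfl⟩ := mem_span_range_iff_exists_fun K |>.mp hy
  simp only [sum_lie, lie_sum, smul_lie, lie_smul, Finset.smul_sum]
  exact sum_mem fun _ _ => sum_mem fun _ _ =>
    smul_mem _ _ (smul_mem _ _ (lie_mem_span_orderedBrackets v _ _))

lemma derivedSeries_one_le_span_orderedBrackets {k : ℕ} (v : Fin k → L)
    (hv : (center K L).toSubmodule ⊔ span K (Set.range v) = ⊤) :
    (derivedSeries K L 1).toSubmodule ≤ span K (orderedBrackets v : Set L) := by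
  rw [derivedSeries_one_toSubmodule_eq_span, span_le]
  rintro _ ⟨x, y, rfl⟩
  obtain ⟨z, hz, s, hs, rfl⟩ := mem_sup.mp (hv ▸ mem_top : x ∈ _)
  obtain ⟨w, hw, t, ht, rfl⟩ := mem_sup.mp (hv ▸ mem_top : y ∈ _)
  have hz' : ∀ u : L, ⁅z, u⁆ = 0 := fun u => by
    rw [← lie_skew, (LieModule.mem_maxTrivSubmodule K L L z).mp hz u, neg_zero]
  rw [add_lie, lie_add, lie_add, hz', hz', (LieModule.mem_maxTrivSubmodule K L L w).mp hw]
  simpa using lie_mem_span_orderedBrackets_of_mem_span v hs ht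

theorem finrank_derivedSeries_one_le_choose [FiniteDimensional K L] :
    finrank K (derivedSeries K L 1) ≤ (finrank K (L ⧸ center K L)).choose 2 := by
  obtain ⟨v, hv⟩ := (center K L).toSubmodule.exists_fin_sup_span_range_eq_top
  calc finrank K (derivedSeries K L 1)
      ≤ finrank K (span K (orderedBrackets v : Set L)) :=
        finrank_mono (derivedSeries_one_le_span_orderedBrackets v hv)
    _ ≤ (orderedBrackets v).card := finrank_span_finset_le_card _
    _ ≤ (Finset.univ.filter fun p : Fin _ × Fin _ => p.1 < p.2).card := by
        classical
        unfold orderedBrackets; exact Finset.card_image_le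
    _ = _ := by rw [Fintype.card_product_filter_lt, Fintype.card_fin]; rfl

lemma orthogonal_derivedSeries_one_le_center (B : LinearMap.BilinForm K L)
    (hinv : ∀ x y z : L, B ⁅x, y⁆ z = B x ⁅y, z⁆) (hB : B.SeparatingRight) :
    B.orthogonal (derivedSeries K L 1).toSubmodule ≤ (center K L).toSubmodule := by
  intro z hz
  refine (LieModule.mem_maxTrivSubmodule K L L z).mpr fun y => hB _ fun n => ?_
  rw [← hinv]
  exact hz _ (lie_mem_derivedSeries_one n y)

theorem finrank_quotient_center_le_finrank_derivedSeries_one [FiniteDimensional K L]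
    (B : LinearMap.BilinForm K L) (hinv : ∀ x y z : L, B ⁅x, y⁆ z = B x ⁅y, z⁆)
    (hB : B.Nondegenerate) :
    finrank K (L ⧸ center K L) ≤ finrank K (derivedSeries K L 1) := by
  have hperp := LinearMap.BilinForm.finrank_orthogonal hB (derivedSeries K L 1).toSubmodule
  have hle := finrank_mono (orthogonal_derivedSeries_one_le_center B hinv hB.2)
  have hquot := (center K L).toSubmodule.finrank_quotient_add_finrank
  have hD := (derivedSeries K L 1).toSubmodule.finrank_le
  change finrank K (L ⧸ (center K L).toSubmodule) ≤ finrank K (derivedSeries K L 1).toSubmodule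
  omega

end LieAlgebra

theorem derived_ideal_dim_ge_three_general
    {g : Type*} [LieRing g] [LieAlgebra ℂ g] [Module.Finite ℂ g]
    (B : LinearMap.BilinForm ℂ g)
    (hnondeg : B.Nondegenerate)
    (hinv : ∀ x y z : g, B ⁅x, y⁆ z = B x ⁅y, z⁆)
    (hnonabelian : ¬ ∀ x y : g, ⁅x, y⁆ = 0) :
    3 ≤ Module.finrank ℂ ↥(LieAlgebra.derivedSeries ℂ g 1) := by
  by_contra! hlt
  have hlower := LieAlgebra.finrank_quotient_center_le_finrank_derivedSeries_one B hinv hnondeg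
  have hupper := LieAlgebra.finrank_derivedSeries_one_le_choose (K := ℂ) (L := g)
  have hcodim : finrank ℂ (g ⧸ LieAlgebra.center ℂ g) ≤ 2 := by omega
  have hzero : finrank ℂ (LieAlgebra.derivedSeries ℂ g 1) = 0 := by
    interval_cases finrank ℂ (g ⧸ LieAlgebra.center ℂ g) <;> simp at hupper <;> omega
  exact hnonabelian (LieAlgebra.lie_eq_zero_of_finrank_derivedSeries_one_eq_zero hzero)

/-- Every non-Abelian quadratic Lie algebra `(g,B)` satisfies
`dim [g,g] ≥ 3`, where `[g,g]` is the derived ideal of `g`. -/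
theorem derived_ideal_dim_ge_three
    {g : Type*} [LieRing g] [LieAlgebra ℂ g] [Module.Finite ℂ g]
    (B : LinearMap.BilinForm ℂ g)
    (hsymm : ∀ x y : g, B x y = B y x)
    (hnondeg : B.Nondegenerate)
    (hinv : ∀ x y z : g, B ⁅x, y⁆ z = B x ⁅y, z⁆)
    (hnonabelian : ¬ ∀ x y : g, ⁅x, y⁆ = 0) :
    3 ≤ Module.finrank ℂ ↥(LieAlgebra.derivedSeries ℂ g 1) :=
  derived_ideal_dim_ge_three_general B hnondeg hinv hnonabelian
end

section
/- Let (g,B) be a non-Abelian quadratic Lie algebra. Then there exist Lie ideals z and l of g such that: (i) g is the internal direct sum of z and l and B(z,l) = 0; (ii) z is contained in the center of g and l ≠ {0}; (iii) the restrictions of B to z × z and to l × l are nondegenerate; (iv) l is non-Abelian; (v) the intersection of the center of g with l is contained in [l,l] (i.e. the center of the quadratic Lie algebra l is totally isotropic). -/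
/-!
Let `Z` be the center of `g`. The radical `Z ∩ Z^⊥` of `B` on `Z` has a complement `z` in `Z`
on which `B` is nondegenerate, so `g = z ⊕ l` with `l = z^⊥`, an ideal by invariance. Since `z`
is central, `[g,g] = [l,l]`, and this is nonzero because `g` is non-Abelian. Invariance and
nondegeneracy give `Z^⊥ = [g,g]`, and every element of `Z ∩ l` is orthogonal both to `z` and to
the radical, hence to `Z`, so it lies in `[g,g] = [l,l]`.
-/

open LieAlgebra

namespace LinearMap.BilinForm

section CommRing

variable {R M : Type*} [CommRing R] [AddCommGroup M] [Module R M] {B : LinearMap.BilinForm R M}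

lemma eq_zero_of_restrict_nondegenerate {W : Submodule R M} (hW : (B.restrict W).Nondegenerate)
    {x : M} (hx : x ∈ W) (h : ∀ y ∈ W, B x y = 0) : x = 0 :=
  congrArg Subtype.val (hW.1 ⟨x, hx⟩ fun y => h y y.2)

lemma inf_orthogonal_le_orthogonal_of_le_sup (hB : B.IsRefl) {W C : Submodule R M}
    (hWC : W ≤ W ⊓ B.orthogonal W ⊔ C) : W ⊓ B.orthogonal C ≤ B.orthogonal W := by
  rintro x ⟨hxW, hxC⟩ w hw
  obtain ⟨r, ⟨-, hr⟩, c, hc, rfl⟩ := Submodule.mem_sup.mp (hWC hw)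
  rw [map_add, LinearMap.add_apply, hB _ _ (hr x hxW), hxC c hc, add_zero]

lemma restrict_nondegenerate_of_disjoint_of_le_sup (hB : B.IsRefl) {W C : Submodule R M}
    (hCW : C ≤ W) (hdisj : Disjoint (W ⊓ B.orthogonal W) C)
    (hWC : W ≤ W ⊓ B.orthogonal W ⊔ C) :
    (B.restrict C).Nondegenerate := by
  refine B.nondegenerate_restrict_of_disjoint_orthogonal hB (Submodule.disjoint_def.mpr ?_)
  intro x hxC hxCperp
  have hxW : x ∈ W := hCW hxC
  exact Submodule.disjoint_def.mp hdisj x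
    ⟨hxW, inf_orthogonal_le_orthogonal_of_le_sup hB hWC ⟨hxW, hxCperp⟩⟩ hxC

end CommRing

lemma nondegenerate_restrict_orthogonal {K V : Type*} [Field K] [AddCommGroup V] [Module K V]
    [FiniteDimensional K V] {B : LinearMap.BilinForm K V} (hB : B.Nondegenerate)
    (hBr : B.IsRefl) {W : Submodule K V} (hW : (B.restrict W).Nondegenerate) :
    (B.restrict (B.orthogonal W)).Nondegenerate := by
  rw [restrict_nondegenerate_iff_isCompl_orthogonal hBr, orthogonal_orthogonal hB hBr]
  exact (isCompl_orthogonal_of_restrict_nondegenerate hBr hW).symm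

lemma lieInvariant_of_apply_lie_eq {R L : Type*} [CommRing R] [LieRing L] [LieAlgebra R L]
    {B : LinearMap.BilinForm R L} (hinv : ∀ x y z : L, B ⁅x, y⁆ z = B x ⁅y, z⁆) :
    B.lieInvariant L := fun x y z => by
  rw [← hinv, ← lie_skew, map_neg, LinearMap.neg_apply]

end LinearMap.BilinForm

namespace LieIdeal

variable {R L : Type*} [CommRing R] [LieRing L] [LieAlgebra R L]

def ofLeCenter (p : Submodule R L) (hp : p ≤ (center R L).toSubmodule) : LieIdeal R L where
  toSubmodule := p
  lie_mem {x m} hm := by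
    rw [(LieModule.mem_maxTrivSubmodule R L L m).mp (hp hm) x]
    exact p.zero_mem

lemma lie_eq_bot_of_le_center {I : LieIdeal R L} (hI : I ≤ center R L) (J : LieIdeal R L) :
    ⁅I, J⁆ = ⊥ := by
  rw [LieSubmodule.lie_eq_bot_iff]
  intro x hx y _
  rw [← lie_skew, (LieModule.mem_maxTrivSubmodule R L L x).mp (hI hx) y, neg_zero]

lemma lie_top_top_eq_of_sup_eq_top {z l : LieIdeal R L} (hz : z ≤ center R L)
    (h : z ⊔ l = ⊤) :
    ⁅(⊤ : LieIdeal R L), ⊤⁆ = ⁅l, l⁆ := by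
  rw [← h, LieSubmodule.sup_lie, lie_eq_bot_of_le_center hz, bot_sup_eq, LieSubmodule.lie_sup,
    LieSubmodule.lie_comm, lie_eq_bot_of_le_center hz, bot_sup_eq]

end LieIdeal

namespace LieAlgebra

variable {K L : Type*} [Field K] [LieRing L] [LieAlgebra K L] {B : LinearMap.BilinForm K L}
  (hinv : ∀ x y z : L, B ⁅x, y⁆ z = B x ⁅y, z⁆)
include hinv

lemma orthogonal_lie_top_top_eq_center (hB : B.Nondegenerate) :
    B.orthogonal (⁅(⊤ : LieIdeal K L), (⊤ : LieIdeal K L)⁆ : LieIdeal K L).toSubmodule =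
      (center K L).toSubmodule := by
  ext x
  refine ⟨fun hx => (LieModule.mem_maxTrivSubmodule K L L x).mpr fun y => ?_, fun hx => ?_⟩
  · refine hB.2 _ fun w => ?_
    rw [← hinv]
    exact hx _ (LieSubmodule.lie_mem_lie (LieSubmodule.mem_top w) (LieSubmodule.mem_top y))
  · suffices (⁅(⊤ : LieIdeal K L), (⊤ : LieIdeal K L)⁆ : LieIdeal K L).toSubmodule ≤
        LinearMap.ker (B.flip x) from fun d hd => this hd
    rw [LieSubmodule.lieIdeal_oper_eq_linear_span', Submodule.span_le]
    rintro _ ⟨u, -, v, -, rfl⟩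
    change B ⁅u, v⁆ x = 0
    rw [hinv, (LieModule.mem_maxTrivSubmodule K L L x).mp hx v, map_zero]

lemma orthogonal_center_eq_lie_top_top [FiniteDimensional K L] (hB : B.Nondegenerate)
    (hBr : B.IsRefl) :
    B.orthogonal (center K L).toSubmodule =
      (⁅(⊤ : LieIdeal K L), (⊤ : LieIdeal K L)⁆ : LieIdeal K L).toSubmodule := by
  rw [← orthogonal_lie_top_top_eq_center hinv hB, B.orthogonal_orthogonal hB hBr]

end LieAlgebra

/-- Every non-Abelian quadratic Lie algebra `(g,B)` decomposes as
`g = z ⊥⊕ l` with `z` a central ideal, `l ≠ 0` a non-Abelian ideal, the restrictions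
of `B` to `z` and `l` nondegenerate, and the center of `l` totally isotropic
(i.e. `Z(g) ⊓ l ⊆ [l,l]`). -/
theorem quadratic_decomposition
    {g : Type*} [LieRing g] [LieAlgebra ℂ g] [Module.Finite ℂ g]
    (B : LinearMap.BilinForm ℂ g)
    (hsymm : ∀ x y : g, B x y = B y x)
    (hnondeg : B.Nondegenerate)
    (hinv : ∀ x y z : g, B ⁅x, y⁆ z = B x ⁅y, z⁆)
    (hnonabelian : ¬ ∀ x y : g, ⁅x, y⁆ = 0) :
    ∃ z l : LieIdeal ℂ g,
      -- (i) internal direct sum, orthogonal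
      (z ⊓ l = ⊥ ∧ z ⊔ l = ⊤ ∧ ∀ x ∈ z, ∀ y ∈ l, B x y = 0) ∧
      -- (ii) z central, l nonzero
      (z ≤ LieAlgebra.center ℂ g ∧ l ≠ ⊥) ∧
      -- (iii) the restrictions of B to z × z and l × l are nondegenerate
      ((∀ x ∈ z, (∀ y ∈ z, B x y = 0) → x = 0) ∧
        (∀ x ∈ l, (∀ y ∈ l, B x y = 0) → x = 0)) ∧
      -- (iv) l is non-Abelian
      (∃ x ∈ l, ∃ y ∈ l, ⁅x, y⁆ ≠ 0) ∧
      -- (v) the center of l is totally isotropic: Z(g) ⊓ l ⊆ [l,l]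
      (LieAlgebra.center ℂ g ⊓ l ≤ ⁅l, l⁆) := by
  have hrefl : B.IsRefl := fun x y h => hsymm x y ▸ h
  set Z := (center ℂ g).toSubmodule
  obtain ⟨C, hdisj, hsup⟩ :=
    IsModularLattice.exists_disjoint_and_sup_eq (inf_le_left : Z ⊓ B.orthogonal Z ≤ Z)
  have hCZ : C ≤ Z := hsup ▸ le_sup_right
  have hCnd : (B.restrict C).Nondegenerate :=
    B.restrict_nondegenerate_of_disjoint_of_le_sup hrefl hCZ hdisj hsup.ge
  let z := LieIdeal.ofLeCenter C hCZ
  let l := InvariantForm.orthogonal B (B.lieInvariant_of_apply_lie_eq hinv) z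
  have hcompl : IsCompl z l := by
    rw [← LieSubmodule.isCompl_toSubmodule]
    exact B.isCompl_orthogonal_of_restrict_nondegenerate hrefl hCnd
  have hderived : ⁅(⊤ : LieIdeal ℂ g), ⊤⁆ = ⁅l, l⁆ :=
    LieIdeal.lie_top_top_eq_of_sup_eq_top hCZ hcompl.sup_eq_top
  have hll : ⁅l, l⁆ ≠ ⊥ := by
    simpa [← hderived, LieSubmodule.lie_eq_bot_iff] using hnonabelian
  have hlnd := B.nondegenerate_restrict_orthogonal hnondeg hrefl hCnd
  obtain ⟨x, hx, y, hy, hxy⟩ : ∃ x ∈ l, ∃ y ∈ l, ⁅x, y⁆ ≠ 0 := by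
    simpa [LieSubmodule.lie_eq_bot_iff] using hll
  refine ⟨z, l, ⟨hcompl.inf_eq_bot, hcompl.sup_eq_top, fun x hx y hy => hy x hx⟩,
    ⟨hCZ, fun h => hll (by rw [h, LieSubmodule.lie_bot])⟩,
    ⟨fun _ => B.eq_zero_of_restrict_nondegenerate hCnd,
      fun _ => B.eq_zero_of_restrict_nondegenerate hlnd⟩,
    ⟨x, hx, y, hy, hxy⟩, ?_⟩
  rw [← hderived, ← LieSubmodule.toSubmodule_le_toSubmodule, LieSubmodule.inf_toSubmodule,
    ← orthogonal_center_eq_lie_top_top hinv hnondeg hrefl]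
  exact B.inf_orthogonal_le_orthogonal_of_le_sup hrefl hsup.ge
end

section
/- Let (g1,B1) and (g2,B2) be non-Abelian quadratic Lie algebras, and let g = g1 × g2 be the product Lie algebra equipped with the bilinear form B((x1,x2),(y1,y2)) = B1(x1,y1) + B2(x2,y2). Then (g,B) is a quadratic Lie algebra and dup(g) = 0, i.e. g is ordinary. -/
/-- The space of linear functionals `α` on `g` with `α ∧ I = 0`, where
`I(X,Y,Z) = B([X,Y],Z)` is the canonical 3-form of the quadratic Lie algebra `(g,B)`. -/
def dupSubmodule {g : Type*} [LieRing g] [LieAlgebra ℂ g]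
    (B : LinearMap.BilinForm ℂ g) : Submodule ℂ (Module.Dual ℂ g) where
  carrier := {α | ∀ X Y Z T : g,
    α X * B ⁅Y, Z⁆ T - α Y * B ⁅X, Z⁆ T + α Z * B ⁅X, Y⁆ T - α T * B ⁅X, Y⁆ Z = 0}
  add_mem' := by
    intro a b ha hb X Y Z T
    have h1 := ha X Y Z T
    have h2 := hb X Y Z T
    simp only [LinearMap.add_apply]
    linear_combination h1 + h2
  zero_mem' := by intro X Y Z T; simp
  smul_mem' := by
    intro c a ha X Y Z T
    have h := ha X Y Z T
    simp only [LinearMap.smul_apply, smul_eq_mul]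
    linear_combination c * h

/-- The dup-number of a quadratic Lie algebra `(g,B)`:
the dimension of `{α ∈ g* | α ∧ I = 0}`. -/
noncomputable def dup {g : Type*} [LieRing g] [LieAlgebra ℂ g]
    (B : LinearMap.BilinForm ℂ g) : ℕ :=
  Module.finrank ℂ (dupSubmodule B)

section Prod

variable {g1 g2 : Type*} [LieRing g1] [LieAlgebra ℂ g1] [LieRing g2] [LieAlgebra ℂ g2]

/-- The product Lie ring structure on `g1 × g2`, with bracket computed componentwise. -/
instance Prod.instLieRingOfProd : LieRing (g1 × g2) where
  bracket x y := (⁅x.1, y.1⁆, ⁅x.2, y.2⁆)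
  add_lie x y z := by
    show (⁅x.1 + y.1, z.1⁆, ⁅x.2 + y.2, z.2⁆) =
      ((⁅x.1, z.1⁆, ⁅x.2, z.2⁆) + (⁅y.1, z.1⁆, ⁅y.2, z.2⁆) : g1 × g2)
    rw [Prod.mk_add_mk, add_lie, add_lie]
  lie_add x y z := by
    show (⁅x.1, y.1 + z.1⁆, ⁅x.2, y.2 + z.2⁆) =
      ((⁅x.1, y.1⁆, ⁅x.2, y.2⁆) + (⁅x.1, z.1⁆, ⁅x.2, z.2⁆) : g1 × g2)
    rw [Prod.mk_add_mk, lie_add, lie_add]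
  lie_self x := by
    show (⁅x.1, x.1⁆, ⁅x.2, x.2⁆) = (0 : g1 × g2)
    simp
  leibniz_lie x y z := by
    show (⁅x.1, ⁅y.1, z.1⁆⁆, ⁅x.2, ⁅y.2, z.2⁆⁆) =
      ((⁅⁅x.1, y.1⁆, z.1⁆, ⁅⁅x.2, y.2⁆, z.2⁆) + (⁅y.1, ⁅x.1, z.1⁆⁆, ⁅y.2, ⁅x.2, z.2⁆⁆) : g1 × g2)
    rw [Prod.mk_add_mk, ← leibniz_lie, ← leibniz_lie]

/-- The product Lie algebra structure on `g1 × g2`. -/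
instance Prod.instLieAlgebraOfProd : LieAlgebra ℂ (g1 × g2) where
  lie_smul t x y := by
    show (⁅x.1, t • y.1⁆, ⁅x.2, t • y.2⁆) = t • ((⁅x.1, y.1⁆, ⁅x.2, y.2⁆) : g1 × g2)
    rw [Prod.smul_mk, lie_smul, lie_smul]

/-- The orthogonal direct sum of the bilinear forms `B1` and `B2` on the product `g1 × g2`:
`B((x1,x2),(y1,y2)) = B1(x1,y1) + B2(x2,y2)`. -/
noncomputable def prodForm (B1 : LinearMap.BilinForm ℂ g1) (B2 : LinearMap.BilinForm ℂ g2) :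
    LinearMap.BilinForm ℂ (g1 × g2) :=
  B1.comp (LinearMap.fst ℂ g1 g2) (LinearMap.fst ℂ g1 g2) +
    B2.comp (LinearMap.snd ℂ g1 g2) (LinearMap.snd ℂ g1 g2)

end Prod

/-
Each factor is non-Abelian with a nondegenerate form, so its canonical 3-form `I₁` (resp. `I₂`) is
nonzero. The canonical 3-form of the product is `I₁ + I₂`, with `I₁` living on the first factor
only. Evaluating `(α ∧ I)(X, Y, Z, T) = 0` at `X, Y, Z` in the first factor with `I₁(X, Y, Z) ≠ 0`
and `T` in the second leaves only `α(T) I₁(X, Y, Z) = 0`, so `α` vanishes on the second factor, and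
symmetrically on the first.
-/

theorem apply_eq_zero_of_mem_dupSubmodule {g : Type*} [LieRing g] [LieAlgebra ℂ g]
    {B : LinearMap.BilinForm ℂ g} {α : Module.Dual ℂ g} (hα : α ∈ dupSubmodule B)
    {X Y Z T : g} (hXYZ : B ⁅X, Y⁆ Z ≠ 0)
    (hYZ : B ⁅Y, Z⁆ T = 0) (hXZ : B ⁅X, Z⁆ T = 0) (hXY : B ⁅X, Y⁆ T = 0) : α T = 0 := by
  have h := hα X Y Z T
  rw [hYZ, hXZ, hXY] at h
  exact (mul_eq_zero.mp (by linear_combination -h)).resolve_right hXYZ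

theorem exists_bilinForm_lie_ne_zero {g : Type*} [LieRing g] [LieAlgebra ℂ g]
    {B : LinearMap.BilinForm ℂ g} (hB : B.SeparatingLeft) (h : ¬ ∀ x y : g, ⁅x, y⁆ = 0) :
    ∃ x y z : g, B ⁅x, y⁆ z ≠ 0 := by
  push Not at h
  obtain ⟨x, y, hxy⟩ := h
  obtain ⟨z, hz⟩ := not_forall.mp (mt (hB _) hxy)
  exact ⟨x, y, z, hz⟩

section Prod

variable {g1 g2 : Type*} [LieRing g1] [LieRing g2]

theorem prod_lie_mk (x1 y1 : g1) (x2 y2 : g2) :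
    ⁅(x1, x2), (y1, y2)⁆ = (⁅x1, y1⁆, ⁅x2, y2⁆) :=
  rfl

variable [LieAlgebra ℂ g1] [LieAlgebra ℂ g2]
  (B1 : LinearMap.BilinForm ℂ g1) (B2 : LinearMap.BilinForm ℂ g2)

@[simp]
theorem prodForm_mk (x1 y1 : g1) (x2 y2 : g2) :
    prodForm B1 B2 (x1, x2) (y1, y2) = B1 x1 y1 + B2 x2 y2 :=
  rfl

variable {B1 B2}

theorem prodForm_symm (h1 : ∀ x y : g1, B1 x y = B1 y x) (h2 : ∀ x y : g2, B2 x y = B2 y x)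
    (x y : g1 × g2) : prodForm B1 B2 x y = prodForm B1 B2 y x := by
  obtain ⟨x1, x2⟩ := x
  obtain ⟨y1, y2⟩ := y
  simp only [prodForm_mk, h1 x1, h2 x2]

theorem prodForm_lie (h1 : ∀ x y z : g1, B1 ⁅x, y⁆ z = B1 x ⁅y, z⁆)
    (h2 : ∀ x y z : g2, B2 ⁅x, y⁆ z = B2 x ⁅y, z⁆) (x y z : g1 × g2) :
    prodForm B1 B2 ⁅x, y⁆ z = prodForm B1 B2 x ⁅y, z⁆ := by
  obtain ⟨x1, x2⟩ := x
  obtain ⟨y1, y2⟩ := y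
  obtain ⟨z1, z2⟩ := z
  simp only [prod_lie_mk, prodForm_mk, h1, h2]

theorem prodForm_separatingLeft (h1 : B1.SeparatingLeft) (h2 : B2.SeparatingLeft) :
    (prodForm B1 B2).SeparatingLeft := by
  rintro ⟨x1, x2⟩ hx
  refine Prod.ext (h1 x1 fun y ↦ ?_) (h2 x2 fun y ↦ ?_)
  · simpa using hx (y, 0)
  · simpa using hx (0, y)

theorem prodForm_separatingRight (h1 : B1.SeparatingRight) (h2 : B2.SeparatingRight) :
    (prodForm B1 B2).SeparatingRight := by
  rintro ⟨y1, y2⟩ hy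
  refine Prod.ext (h1 y1 fun x ↦ ?_) (h2 y2 fun x ↦ ?_)
  · simpa using hy (x, 0)
  · simpa using hy (0, x)

theorem prodForm_nondegenerate (h1 : B1.Nondegenerate) (h2 : B2.Nondegenerate) :
    (prodForm B1 B2).Nondegenerate :=
  ⟨prodForm_separatingLeft h1.1 h2.1, prodForm_separatingRight h1.2 h2.2⟩

theorem dupSubmodule_prodForm_eq_bot (h1 : B1.SeparatingLeft) (h2 : B2.SeparatingLeft)
    (hna1 : ¬ ∀ x y : g1, ⁅x, y⁆ = 0) (hna2 : ¬ ∀ x y : g2, ⁅x, y⁆ = 0) :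
    dupSubmodule (prodForm B1 B2) = ⊥ := by
  obtain ⟨x1, y1, z1, hxyz1⟩ := exists_bilinForm_lie_ne_zero h1 hna1
  obtain ⟨x2, y2, z2, hxyz2⟩ := exists_bilinForm_lie_ne_zero h2 hna2
  refine (Submodule.eq_bot_iff _).mpr fun α hα ↦ LinearMap.prod_ext ?_ ?_
  · ext s
    exact apply_eq_zero_of_mem_dupSubmodule hα (X := (0, x2)) (Y := (0, y2)) (Z := (0, z2))
      (by simpa using hxyz2) (by simp) (by simp) (by simp)
  · ext t
    exact apply_eq_zero_of_mem_dupSubmodule hα (X := (x1, 0)) (Y := (y1, 0)) (Z := (z1, 0))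
      (by simpa using hxyz1) (by simp) (by simp) (by simp)

end Prod

theorem prod_of_nonabelian_is_ordinary_general
    {g1 g2 : Type*} [LieRing g1] [LieAlgebra ℂ g1]
    [LieRing g2] [LieAlgebra ℂ g2]
    (B1 : LinearMap.BilinForm ℂ g1) (B2 : LinearMap.BilinForm ℂ g2)
    (hsymm1 : ∀ x y : g1, B1 x y = B1 y x)
    (hnondeg1 : B1.Nondegenerate)
    (hinv1 : ∀ x y z : g1, B1 ⁅x, y⁆ z = B1 x ⁅y, z⁆)
    (hnonabelian1 : ¬ ∀ x y : g1, ⁅x, y⁆ = 0)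
    (hsymm2 : ∀ x y : g2, B2 x y = B2 y x)
    (hnondeg2 : B2.Nondegenerate)
    (hinv2 : ∀ x y z : g2, B2 ⁅x, y⁆ z = B2 x ⁅y, z⁆)
    (hnonabelian2 : ¬ ∀ x y : g2, ⁅x, y⁆ = 0) :
    (∀ x y : g1 × g2, prodForm B1 B2 x y = prodForm B1 B2 y x) ∧
    (prodForm B1 B2).Nondegenerate ∧
    (∀ x y z : g1 × g2, prodForm B1 B2 ⁅x, y⁆ z = prodForm B1 B2 x ⁅y, z⁆) ∧
    dup (prodForm B1 B2) = 0 := by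
  refine ⟨prodForm_symm hsymm1 hsymm2, prodForm_nondegenerate hnondeg1 hnondeg2,
    prodForm_lie hinv1 hinv2, ?_⟩
  rw [dup, dupSubmodule_prodForm_eq_bot hnondeg1.1 hnondeg2.1 hnonabelian1 hnonabelian2]
  exact finrank_bot ℂ _

/-- The orthogonal direct sum of two non-Abelian quadratic Lie algebras
`(g1,B1)` and `(g2,B2)` is a quadratic Lie algebra and is ordinary: `dup(g1 × g2) = 0`. -/
theorem prod_of_nonabelian_is_ordinary
    {g1 g2 : Type*} [LieRing g1] [LieAlgebra ℂ g1] [Module.Finite ℂ g1]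
    [LieRing g2] [LieAlgebra ℂ g2] [Module.Finite ℂ g2]
    (B1 : LinearMap.BilinForm ℂ g1) (B2 : LinearMap.BilinForm ℂ g2)
    (hsymm1 : ∀ x y : g1, B1 x y = B1 y x)
    (hnondeg1 : B1.Nondegenerate)
    (hinv1 : ∀ x y z : g1, B1 ⁅x, y⁆ z = B1 x ⁅y, z⁆)
    (hnonabelian1 : ¬ ∀ x y : g1, ⁅x, y⁆ = 0)
    (hsymm2 : ∀ x y : g2, B2 x y = B2 y x)
    (hnondeg2 : B2.Nondegenerate)
    (hinv2 : ∀ x y z : g2, B2 ⁅x, y⁆ z = B2 x ⁅y, z⁆)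
    (hnonabelian2 : ¬ ∀ x y : g2, ⁅x, y⁆ = 0) :
    (∀ x y : g1 × g2, prodForm B1 B2 x y = prodForm B1 B2 y x) ∧
    (prodForm B1 B2).Nondegenerate ∧
    (∀ x y z : g1 × g2, prodForm B1 B2 ⁅x, y⁆ z = prodForm B1 B2 x ⁅y, z⁆) ∧
    dup (prodForm B1 B2) = 0 :=
  prod_of_nonabelian_is_ordinary_general B1 B2 hsymm1 hnondeg1 hinv1 hnonabelian1 hsymm2 hnondeg2
    hinv2 hnonabelian2
end

section
/- Every non-Abelian quadratic Lie algebra (g,B) with dim g ≤ 5 is singular, i.e. dup(g) ≥ 1. -/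
/-!
The condition `α ∧ I = 0` is linear in `α`, so `dup(g)` is the nullity of
`α ↦ α ∧ I : g* → Λ⁴g*`; the form `I` is alternating by invariance of `B`. For `n = dim g ≤ 4`
the target has dimension `C(n, 4) < n`, so the kernel is nonzero by rank–nullity. For `n = 5`,
`(β, α) ↦ (α ∧ β ∧ I)(e₀, …, e₄)` is an alternating form on the five-dimensional space `g*`,
hence degenerate; pairing a vector `β` of its radical with the coordinate functionals recovers
the values of `β ∧ I` on the basis 4-tuples, so `β ∧ I = 0`.
-/

open Module

section Wedge

variable {R M : Type*} [CommRing R] [AddCommGroup M] [Module R M] {n : ℕ}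

/-- `dualWedge φ α = α ∧ φ`. -/
def dualWedge : (M [⋀^Fin n]→ₗ[R] R) →ₗ[R] Dual R M →ₗ[R] M [⋀^Fin (n + 1)]→ₗ[R] R :=
  LinearMap.smulRightₗ.flip.compr₂ AlternatingMap.alternatizeUncurryFinLM

theorem dualWedge_apply (φ : M [⋀^Fin n]→ₗ[R] R) (α : Dual R M) (v : Fin (n + 1) → M) :
    dualWedge φ α v = ∑ i : Fin (n + 1), (-1) ^ (i : ℕ) * α (v i) * φ (i.removeNth v) := by
  simp [dualWedge, AlternatingMap.alternatizeUncurryFin_apply, mul_assoc]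

theorem dualWedge_dualWedge_self (φ : M [⋀^Fin n]→ₗ[R] R) (α : Dual R M) :
    dualWedge (dualWedge φ α) α = 0 := by
  rw [← AlternatingMap.alternatizeUncurryFin_alternatizeUncurryFinLM_comp_of_symmetric
    (f := α.smulRight (α.smulRight φ)) fun x y => by ext; simp [smul_smul, mul_comm]]
  exact congrArg AlternatingMap.alternatizeUncurryFin (LinearMap.ext fun x => by simp [dualWedge])

theorem AlternatingMap.eq_zero_of_forall_removeNth {N : Type*} [AddCommGroup N] [Module R N]
    (e : Basis (Fin (n + 1)) R M) (φ : M [⋀^Fin n]→ₗ[R] N)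
    (h : ∀ i : Fin (n + 1), φ (i.removeNth e) = 0) : φ = 0 := by
  refine e.ext_alternating fun v hv => ?_
  obtain ⟨i, hi⟩ : ∃ i, ∀ k, v k ≠ i := by
    by_contra! hsurj
    have := Fintype.card_le_of_surjective v hsurj
    simp at this
  choose w hw using fun k => Fin.exists_succAbove_eq (hi k)
  have hw_inj : Function.Injective w := fun a b hab => hv (by rw [← hw a, ← hw b, hab])
  let σ := Equiv.ofBijective w hw_inj.bijective_of_finite
  have hv_eq : (fun k => e (v k)) = i.removeNth e ∘ σ := funext fun k => by
    simp [σ, Fin.removeNth, hw]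
  rw [hv_eq, φ.map_perm, h, smul_zero, AlternatingMap.zero_apply]

end Wedge

theorem Matrix.det_eq_zero_of_transpose_eq_neg {ι R : Type*} [Fintype ι] [DecidableEq ι]
    [CommRing R] [NoZeroDivisors R] [CharZero R] {A : Matrix ι ι R} (hA : A.transpose = -A)
    (hι : Odd (Fintype.card ι)) : A.det = 0 := by
  rw [← CharZero.eq_neg_self_iff]
  calc A.det = A.transpose.det := A.det_transpose.symm
    _ = -A.det := by rw [hA, Matrix.det_neg, hι.neg_one_pow, neg_one_mul]

theorem LinearMap.BilinForm.not_nondegenerate_of_isAlt {K V : Type*} [Field K] [CharZero K]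
    [AddCommGroup V] [Module K V] [FiniteDimensional K V] (hV : Odd (finrank K V))
    {B : LinearMap.BilinForm K V} (hB : B.IsAlt) : ¬ B.Nondegenerate := by
  rw [LinearMap.BilinForm.nondegenerate_iff_det_ne_zero (Module.finBasis K V), not_not]
  refine Matrix.det_eq_zero_of_transpose_eq_neg ?_ (by simpa using hV)
  ext i j
  simp [LinearMap.BilinForm.toMatrix_apply, hB.neg_eq]

section FiniteDimensional

variable {K M : Type*} [Field K] [AddCommGroup M] [Module K M] [FiniteDimensional K M] {n : ℕ}

theorem finrank_alternatingMap_eq_choose :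
    finrank K (M [⋀^Fin n]→ₗ[K] K) = (finrank K M).choose n := by
  rw [exteriorPower.alternatingMapLinearEquiv.finrank_eq, Subspace.dual_finrank_eq,
    exteriorPower.finrank_eq]

theorem ker_dualWedge_ne_bot_of_choose_lt (φ : M [⋀^Fin n]→ₗ[K] K)
    (h : (finrank K M).choose (n + 1) < finrank K M) : LinearMap.ker (dualWedge φ) ≠ ⊥ := by
  have : FiniteDimensional K (M [⋀^Fin (n + 1)]→ₗ[K] K) :=
    exteriorPower.alternatingMapLinearEquiv.symm.finiteDimensional
  apply LinearMap.ker_ne_bot_of_finrank_lt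
  rwa [finrank_alternatingMap_eq_choose, Subspace.dual_finrank_eq]

theorem ker_dualWedge_ne_bot_of_odd [CharZero K] (hM : finrank K M = n + 2) (hn : Odd n)
    (φ : M [⋀^Fin n]→ₗ[K] K) : LinearMap.ker (dualWedge φ) ≠ ⊥ := by
  let e := Module.finBasisOfFinrankEq K M hM
  let Ω : LinearMap.BilinForm K (Dual K M) :=
    LinearMap.mk₂ K (fun β α => dualWedge (dualWedge φ β) α e)
      (by simp) (by simp) (by simp) (by simp)
  have hΩ : Ω.IsAlt := fun α => by simp [Ω, dualWedge_dualWedge_self]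
  have hodd : Odd (finrank K (Dual K M)) := by
    rw [Subspace.dual_finrank_eq, hM]
    exact hn.add_even even_two
  obtain ⟨β, hβ, hβΩ⟩ : ∃ β, β ≠ 0 ∧ ∀ α, Ω β α = 0 := by
    have := LinearMap.BilinForm.not_nondegenerate_of_isAlt hodd hΩ
    rw [LinearMap.BilinForm.Nondegenerate, hΩ.isRefl.nondegenerate_iff_separatingLeft,
      LinearMap.SeparatingLeft] at this
    push Not at this
    simpa only [and_comm] using this
  refine (Submodule.ne_bot_iff _).mpr ⟨β, ?_, hβ⟩
  refine AlternatingMap.eq_zero_of_forall_removeNth e _ fun i => ?_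
  simpa [Ω, dualWedge_apply, Finsupp.single_apply] using hβΩ (e.coord i)

end FiniteDimensional

section Lie

variable {R L : Type*} [CommRing R] [LieRing L] [LieAlgebra R L]

theorem apply_lie_self_right_eq_zero (B : LinearMap.BilinForm R L)
    (hB : ∀ x y z : L, B ⁅x, y⁆ z = B x ⁅y, z⁆) (x y : L) : B x ⁅y, x⁆ = 0 := by
  rw [← lie_skew, map_neg, ← hB, lie_self, map_zero, LinearMap.zero_apply, neg_zero]

def canonicalThreeForm (B : LinearMap.BilinForm R L)
    (hB : ∀ x y z : L, B ⁅x, y⁆ z = B x ⁅y, z⁆) : L [⋀^Fin 3]→ₗ[R] R where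
  toFun v := B ⁅v 0, v 1⁆ (v 2)
  map_update_add' := by
    intro _ v i x y
    obtain rfl : ‹DecidableEq (Fin 3)› = instDecidableEqFin 3 := Subsingleton.elim _ _
    fin_cases i <;> simp [add_lie, lie_add]
  map_update_smul' := by
    intro _ v i c x
    obtain rfl : ‹DecidableEq (Fin 3)› = instDecidableEqFin 3 := Subsingleton.elim _ _
    fin_cases i <;> simp [smul_lie, lie_smul]
  map_eq_zero_of_eq' := by
    intro v i j hv hij
    fin_cases i <;> fin_cases j <;> simp_all [apply_lie_self_right_eq_zero B hB]

end Lie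

theorem dupSubmodule_eq_ker_dualWedge {g : Type*} [LieRing g] [LieAlgebra ℂ g]
    (B : LinearMap.BilinForm ℂ g) (hB : ∀ x y z : g, B ⁅x, y⁆ z = B x ⁅y, z⁆) :
    dupSubmodule B = LinearMap.ker (dualWedge (canonicalThreeForm B hB)) := by
  ext α
  have hwedge (v : Fin 4 → g) : dualWedge (canonicalThreeForm B hB) α v =
      α (v 0) * B ⁅v 1, v 2⁆ (v 3) - α (v 1) * B ⁅v 0, v 2⁆ (v 3)
        + α (v 2) * B ⁅v 0, v 1⁆ (v 3) - α (v 3) * B ⁅v 0, v 1⁆ (v 2) := by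
    simp [dualWedge_apply, Fin.sum_univ_four, canonicalThreeForm, Fin.removeNth, Fin.succAbove]
    ring
  simp only [LinearMap.mem_ker, AlternatingMap.ext_iff, hwedge]
  exact ⟨fun h v => h _ _ _ _, fun h X Y Z T => h ![X, Y, Z, T]⟩

theorem dim_le_five_singular_general
    {g : Type*} [LieRing g] [LieAlgebra ℂ g] [Module.Finite ℂ g]
    (B : LinearMap.BilinForm ℂ g)
    (hinv : ∀ x y z : g, B ⁅x, y⁆ z = B x ⁅y, z⁆)
    (hnonabelian : ¬ ∀ x y : g, ⁅x, y⁆ = 0)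
    (hdim : Module.finrank ℂ g ≤ 5) :
    1 ≤ dup B := by
  have : Nontrivial g := by
    contrapose! hnonabelian
    exact fun x y => Subsingleton.elim _ _
  have hpos : 0 < finrank ℂ g := Module.finrank_pos
  rw [dup, dupSubmodule_eq_ker_dualWedge B hinv, Submodule.one_le_finrank_iff]
  rcases hdim.lt_or_eq with hlt | h5
  · apply ker_dualWedge_ne_bot_of_choose_lt
    interval_cases finrank ℂ g <;> decide
  · exact ker_dualWedge_ne_bot_of_odd (n := 3) h5 ⟨1, rfl⟩ _

/-- Every non-Abelian quadratic Lie algebra of dimension at most `5`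
is singular, i.e. `dup(g) ≥ 1`. -/
theorem dim_le_five_singular
    {g : Type*} [LieRing g] [LieAlgebra ℂ g] [Module.Finite ℂ g]
    (B : LinearMap.BilinForm ℂ g)
    (hsymm : ∀ x y : g, B x y = B y x)
    (hnondeg : B.Nondegenerate)
    (hinv : ∀ x y z : g, B ⁅x, y⁆ z = B x ⁅y, z⁆)
    (hnonabelian : ¬ ∀ x y : g, ⁅x, y⁆ = 0)
    (hdim : Module.finrank ℂ g ≤ 5) :
    1 ≤ dup B :=
  dim_le_five_singular_general B hinv hnonabelian hdim
end

section
/- Let (g,B) be a quadratic Lie algebra with dup(g) = 1. Then g is a solvable Lie algebra. -/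
theorem LieAlgebra.isSolvable_of_lie_top_le_of_lie_le_center {R L : Type*} [CommRing R]
    [LieRing L] [LieAlgebra R L] (I : LieIdeal R L) (h₁ : ⁅(⊤ : LieIdeal R L), ⊤⁆ ≤ I)
    (h₂ : ⁅I, I⁆ ≤ center R L) : IsSolvable L := by
  have hsucc (k : ℕ) :
      derivedSeries R L (k + 1) = ⁅derivedSeries R L k, derivedSeries R L k⁆ := by
    rw [derivedSeries_def, derivedSeriesOfIdeal_succ]
  have hcenter : ⁅center R L, center R L⁆ = ⊥ :=
    (LieSubmodule.lie_eq_bot_iff _ _).mpr fun x hx y _ => by rw [← lie_skew, hx y, neg_zero]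
  have h₁' : derivedSeries R L 1 ≤ I := by rw [hsucc]; exact h₁
  have h₂' : derivedSeries R L 2 ≤ center R L := by
    rw [hsucc]; exact (LieSubmodule.mono_lie h₁' h₁').trans h₂
  refine IsSolvable.mk (R := R) (k := 3) (le_bot_iff.mp ?_)
  rw [hsucc, ← hcenter]
  exact LieSubmodule.mono_lie h₂' h₂'

theorem LieAlgebra.apply_lie_eq_zero_of_forall_apply_eq_zero {R L : Type*} [CommRing R]
    [LieRing L] [LieAlgebra R L] (φ : Module.Dual R L) {W : L} (hW : φ W = 1)
    (h : ∀ A y : L, φ y = 0 → φ ⁅A, y⁆ = 0) (A C : L) : φ ⁅A, C⁆ = 0 := by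
  have hker (X : L) : φ (X - φ X • W) = 0 := by simp [hW]
  have hAW : φ ⁅A, W⁆ = 0 := by
    have hWA := h W _ (hker A)
    rw [lie_sub, lie_smul, lie_self, smul_zero, sub_zero] at hWA
    rw [← lie_skew, map_neg, hWA, neg_zero]
  simpa [lie_sub, hAW] using h A _ (hker C)

/-- `wedge3 α β γ X Y Z = (α ∧ β ∧ γ)(X, Y, Z)`. -/
def wedge3 {R M : Type*} [CommRing R] [AddCommGroup M] [Module R M]
    (α β γ : Module.Dual R M) (X Y Z : M) : R :=
  α X * (β Y * γ Z - β Z * γ Y) - α Y * (β X * γ Z - β Z * γ X)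
    + α Z * (β X * γ Y - β Y * γ X)

section Quadratic

variable {g : Type*} [LieRing g] [LieAlgebra ℂ g] {B : LinearMap.BilinForm ℂ g}

theorem mem_dupSubmodule_of_forall_eq_wedge3 {α β γ : Module.Dual ℂ g}
    (h : ∀ X Y Z : g, B ⁅X, Y⁆ Z = wedge3 α β γ X Y Z) : α ∈ dupSubmodule B := by
  intro X Y Z T
  simp only [h, wedge3]
  ring

theorem apply_lie_swap (hsymm : ∀ x y : g, B x y = B y x)
    (hinv : ∀ x y z : g, B ⁅x, y⁆ z = B x ⁅y, z⁆) (x y z : g) :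
    B ⁅x, y⁆ z = -B ⁅x, z⁆ y := by
  rw [← lie_skew, map_neg, LinearMap.neg_apply, hinv, hsymm]

variable {a : g}

theorem smul_lie_sub_smul_lie_add_smul_lie (hsep : B.SeparatingLeft)
    (ha : B a ∈ dupSubmodule B) (X Y Z : g) :
    B a X • ⁅Y, Z⁆ - B a Y • ⁅X, Z⁆ + B a Z • ⁅X, Y⁆ = B ⁅X, Y⁆ Z • a := by
  refine sub_eq_zero.mp (hsep _ fun T => ?_)
  simp only [map_add, map_sub, map_smul, LinearMap.add_apply, LinearMap.sub_apply,
    LinearMap.smul_apply, smul_eq_mul]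
  linear_combination ha X Y Z T

theorem lie_eq_smul_of_apply_eq_zero (hsep : B.SeparatingLeft) (ha : B a ∈ dupSubmodule B)
    {W x y : g} (hW : B a W = 1) (hx : B a x = 0) (hy : B a y = 0) :
    ⁅x, y⁆ = B ⁅W, x⁆ y • a := by
  simpa [hW, hx, hy] using smul_lie_sub_smul_lie_add_smul_lie hsep ha W x y

/-- `I = α ∧ Ω` with `α = B a` and `Ω = I(W, ·, ·)`. -/
theorem apply_lie_eq_wedge (hsymm : ∀ x y : g, B x y = B y x)
    (hinv : ∀ x y z : g, B ⁅x, y⁆ z = B x ⁅y, z⁆) (hsep : B.SeparatingLeft)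
    (ha : B a ∈ dupSubmodule B) {W : g} (hW : B a W = 1) (X Y Z : g) :
    B ⁅X, Y⁆ Z = B a X * B ⁅W, Y⁆ Z - B a Y * B ⁅W, X⁆ Z + B a Z * B ⁅W, X⁆ Y := by
  have h := congrArg (B W) (smul_lie_sub_smul_lie_add_smul_lie hsep ha X Y Z)
  simp only [map_add, map_sub, map_smul, smul_eq_mul, ← hinv] at h
  rw [hsymm W a, hW, mul_one] at h
  exact h.symm

theorem isSolvable_of_apply_lie_eq_zero (hsymm : ∀ x y : g, B x y = B y x)
    (hinv : ∀ x y z : g, B ⁅x, y⁆ z = B x ⁅y, z⁆) (hsep : B.SeparatingLeft)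
    (ha : B a ∈ dupSubmodule B) {W : g} (hW : B a W = 1) (h : ∀ A C : g, B a ⁅A, C⁆ = 0) :
    LieAlgebra.IsSolvable g := by
  have ha_center : a ∈ LieAlgebra.center ℂ g := fun z => hsep _ fun T => by
    rw [apply_lie_swap hsymm hinv, hsymm, h, neg_zero]
  let K : LieIdeal ℂ g := { LinearMap.ker (B a) with lie_mem := fun {A y} _ => h A y }
  refine LieAlgebra.isSolvable_of_lie_top_le_of_lie_le_center K ?_ ?_
  · exact (LieSubmodule.lie_le_iff _ _ _).mpr fun A _ C _ => h A C
  · refine (LieSubmodule.lie_le_iff _ _ _).mpr fun x hx y hy => ?_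
    rw [lie_eq_smul_of_apply_eq_zero hsep ha hW hx hy]
    exact (LieAlgebra.center ℂ g).smul_mem _ ha_center

theorem cyclic_sum_apply_lie_mul_eq_zero (hsymm : ∀ x y : g, B x y = B y x)
    (hinv : ∀ x y z : g, B ⁅x, y⁆ z = B x ⁅y, z⁆) (hsep : B.SeparatingLeft)
    (ha : B a ∈ dupSubmodule B) {W : g} (hW : B a W = 1) (W' : g) {x y z : g}
    (hx : B a x = 0) (hy : B a y = 0) (hz : B a z = 0) :
    B ⁅W, y⁆ z * B ⁅a, W'⁆ x + B ⁅W, z⁆ x * B ⁅a, W'⁆ y + B ⁅W, x⁆ y * B ⁅a, W'⁆ z = 0 := by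
  have hW' (u : g) : B W' ⁅u, a⁆ = B ⁅a, W'⁆ u := by
    rw [← hinv, apply_lie_swap hsymm hinv, ← lie_skew, map_neg, LinearMap.neg_apply, neg_neg]
  have h := congrArg (B W') (lie_jacobi x y z)
  rw [lie_eq_smul_of_apply_eq_zero hsep ha hW hy hz,
    lie_eq_smul_of_apply_eq_zero hsep ha hW hz hx,
    lie_eq_smul_of_apply_eq_zero hsep ha hW hx hy] at h
  simp only [lie_smul, map_add, map_smul, smul_eq_mul, map_zero, hW'] at h
  linear_combination h

theorem apply_lie_eq_sub_mul (hsymm : ∀ x y : g, B x y = B y x)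
    (hinv : ∀ x y z : g, B ⁅x, y⁆ z = B x ⁅y, z⁆) (hsep : B.SeparatingLeft)
    (ha : B a ∈ dupSubmodule B) {W W' y : g} (hW : B a W = 1) (hy : B a y = 0)
    (hy' : B ⁅a, W'⁆ y = 1) (Y Z : g) :
    B ⁅W, Y⁆ Z = B (⁅a, W'⁆ - B ⁅a, W'⁆ W • a) Y * B ⁅W, y⁆ Z
      - B (⁅a, W'⁆ - B ⁅a, W'⁆ W • a) Z * B ⁅W, y⁆ Y := by
  have hker (X : g) : B a (X - B a X • W) = 0 := by simp [hW]
  have hWW (X : g) : B ⁅W, X⁆ W = 0 := by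
    rw [apply_lie_swap hsymm hinv, lie_self, map_zero, LinearMap.zero_apply, neg_zero]
  have h := cyclic_sum_apply_lie_mul_eq_zero hsymm hinv hsep ha hW W' hy (hker Y) (hker Z)
  rw [apply_lie_swap hsymm hinv W (Z - _) y] at h
  simp only [lie_sub, lie_smul, lie_self, smul_zero, sub_zero, map_sub, map_smul,
    LinearMap.sub_apply, LinearMap.smul_apply, smul_eq_mul, hWW, hy'] at h ⊢
  linear_combination h

theorem exists_mem_dupSubmodule_apply_eq_one (hsymm : ∀ x y : g, B x y = B y x)
    (hinv : ∀ x y z : g, B ⁅x, y⁆ z = B x ⁅y, z⁆) (hsep : B.SeparatingLeft)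
    (ha : B a ∈ dupSubmodule B) {W : g} (hW : B a W = 1) (h : ¬∀ A C : g, B a ⁅A, C⁆ = 0) :
    ∃ b y : g, B b ∈ dupSubmodule B ∧ B a y = 0 ∧ B b y = 1 := by
  obtain ⟨W', y, hy, hne⟩ : ∃ W' y : g, B a y = 0 ∧ B ⁅a, W'⁆ y ≠ 0 := by
    by_contra! h'
    refine h (LieAlgebra.apply_lie_eq_zero_of_forall_apply_eq_zero (B a) hW fun A y hy => ?_)
    rw [← hinv]
    exact h' A y hy
  set v := ⁅a, (B ⁅a, W'⁆ y)⁻¹ • W'⁆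
  have hv : B v y = 1 := by simp [v, lie_smul, hne]
  refine ⟨v - B v W • a, y, ?_, hy, by simp [hy, hv]⟩
  refine mem_dupSubmodule_of_forall_eq_wedge3 (β := B ⁅W, y⁆) (γ := B a) fun X Y Z => ?_
  rw [apply_lie_eq_wedge hsymm hinv hsep ha hW,
    apply_lie_eq_sub_mul hsymm hinv hsep ha hW hy hv Y Z,
    apply_lie_eq_sub_mul hsymm hinv hsep ha hW hy hv X Z,
    apply_lie_eq_sub_mul hsymm hinv hsep ha hW hy hv X Y]
  simp only [wedge3]
  ring

end Quadratic

/-- A quadratic Lie algebra with `dup(g) = 1` is solvable. -/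
theorem dup_one_solvable
    {g : Type*} [LieRing g] [LieAlgebra ℂ g] [Module.Finite ℂ g]
    (B : LinearMap.BilinForm ℂ g)
    (hsymm : ∀ x y : g, B x y = B y x)
    (hnondeg : B.Nondegenerate)
    (hinv : ∀ x y z : g, B ⁅x, y⁆ z = B x ⁅y, z⁆)
    (hdup : dup B = 1) :
    LieAlgebra.IsSolvable g := by
  obtain ⟨⟨α, hα⟩, hα0, hspan⟩ := finrank_eq_one_iff'.mp hdup
  obtain ⟨a, rfl⟩ : ∃ a, B a = α := ⟨_, (B.toDual hnondeg).apply_symm_apply α⟩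
  obtain ⟨W, hW⟩ : ∃ W, B a W = 1 := LinearMap.surjective (by simpa using hα0) 1
  by_cases hcomm : ∀ A C : g, B a ⁅A, C⁆ = 0
  · exact isSolvable_of_apply_lie_eq_zero hsymm hinv hnondeg.1 hα hW hcomm
  obtain ⟨b, y, hb, hy, hby⟩ :=
    exists_mem_dupSubmodule_apply_eq_one hsymm hinv hnondeg.1 hα hW hcomm
  obtain ⟨t, ht⟩ := hspan ⟨B b, hb⟩
  have hty := congr(($ht : Module.Dual ℂ g) y)
  simp [hy, hby] at hty
end

section
/- Let (g,B) be a non-Abelian quadratic Lie algebra. Then g is solvable and singular (i.e. dup(g) ≥ 1) if and only if g admits double-extension data. -/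
/-- Double-extension data for a quadratic Lie algebra `(g,B)`: a pair `(X0,Y0)` with
`B(X0,X0) = B(Y0,Y0) = 0`, `B(X0,Y0) = 1`, `[Y0,X0] = 0` and
`[X,Y] = B(X0,X)[Y0,Y] − B(X0,Y)[Y0,X] + B([Y0,X],Y) X0` for all `X,Y`. -/
def HasDoubleExtensionData {g : Type*} [LieRing g] [LieAlgebra ℂ g]
    (B : LinearMap.BilinForm ℂ g) : Prop :=
  ∃ X0 Y0 : g,
    B X0 X0 = 0 ∧ B Y0 Y0 = 0 ∧ B X0 Y0 = 1 ∧ ⁅Y0, X0⁆ = 0 ∧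
    ∀ X Y : g, ⁅X, Y⁆ = B X0 X • ⁅Y0, Y⁆ - B X0 Y • ⁅Y0, X⁆ + B ⁅Y0, X⁆ Y • X0

/-!
Let `α = B(X0,·)` be a nonzero element of the dup space and `B(X0,Y0) = 1`. Nondegeneracy turns
`α ∧ I = 0` into `I = α ∧ Ω` with `Ω(X,Y) = B([Y0,X],Y)`, which is the bracket formula of
double-extension data. If `X0` is central, it is isotropic (otherwise `ad Y0 = 0` and `g` would be
Abelian), and correcting `Y0` by a multiple of `X0` gives double-extension data.

Otherwise choose `Y0` with `Z = [Y0,X0] ≠ 0` and `W` with `B(X0,W) = 0`, `B(Z,W) = 1`. Applying the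
derivation `ad Y0` to `[X,W]` gives `ad Y0 = B(Z,·) [Y0,W] - B([Y0,W],·) Z`, so `I` is decomposable:
`I = B(a 0,·) ∧ B(a 1,·) ∧ B(a 2,·)`, and every `B(a i,·)` is in the dup space. If the Gram matrix
of the `a i` is invertible, the family `X` in `V = span (a i)` dual to them has
`[X (k+1), X (k+2)] = a k`, so `V` is perfect, which solvability forbids since `g` is not Abelian.
Otherwise a kernel vector of the Gram matrix gives a nonzero vector of `V` orthogonal to `V`; it is
central, isotropic and in the dup space, and we conclude as in the first case.

Conversely, double-extension data give `[g,g] ⊆ ker α`, `[ker α, ker α] ⊆ ℂ X0`, hence solvability,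
and `α ∧ I = α ∧ α ∧ Ω = 0`.
-/

namespace LieAlgebra

variable {R L : Type*} [CommRing R] [LieRing L] [LieAlgebra R L]

theorem derivedSeries_succ_le {S T : Submodule R L} {k : ℕ}
    (hk : (derivedSeries R L k).toSubmodule ≤ S) (hST : ∀ x ∈ S, ∀ y ∈ S, ⁅x, y⁆ ∈ T) :
    (derivedSeries R L (k + 1)).toSubmodule ≤ T := by
  rw [derivedSeries_def, derivedSeriesOfIdeal_succ, LieSubmodule.lieIdeal_oper_eq_linear_span,
    Submodule.span_le]
  rintro _ ⟨⟨x, hx⟩, ⟨y, hy⟩, rfl⟩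
  exact hST x (hk hx) y (hk hy)

theorem le_derivedSeries_of_le_span_lie {V : Submodule R L}
    (hV : V ≤ Submodule.span R {z | ∃ x ∈ V, ∃ y ∈ V, ⁅x, y⁆ = z}) (k : ℕ) :
    V ≤ (derivedSeries R L k).toSubmodule := by
  induction k with
  | zero => exact fun x _ => LieSubmodule.mem_top x
  | succ k ih =>
    refine hV.trans (Submodule.span_le.2 ?_)
    rintro _ ⟨x, hx, y, hy, rfl⟩
    rw [SetLike.mem_coe, LieSubmodule.mem_toSubmodule, derivedSeries_def,
      derivedSeriesOfIdeal_succ]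
    exact LieSubmodule.lie_mem_lie (ih hx) (ih hy)

theorem eq_bot_of_le_span_lie [IsSolvable L] {V : Submodule R L}
    (hV : V ≤ Submodule.span R {z | ∃ x ∈ V, ∃ y ∈ V, ⁅x, y⁆ = z}) : V = ⊥ := by
  obtain ⟨k, hk⟩ := IsSolvable.solvable R L
  have := le_derivedSeries_of_le_span_lie hV k
  rwa [hk, LieSubmodule.bot_toSubmodule, le_bot_iff] at this

end LieAlgebra

namespace LinearMap.BilinForm

variable {R M : Type*} [CommRing R] [AddCommGroup M] [Module R M]

theorem exists_apply_eq_one {K V : Type*} [Field K] [AddCommGroup V] [Module K V]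
    {B : LinearMap.BilinForm K V} (hB : B.Nondegenerate) {x : V} (hx : x ≠ 0) :
    ∃ y : V, B x y = 1 := by
  obtain ⟨y, hy⟩ : ∃ y, B x y ≠ 0 := by
    by_contra! h
    exact hx (hB.1 x h)
  exact ⟨(B x y)⁻¹ • y, by rw [map_smul, smul_eq_mul, inv_mul_cancel₀ hy]⟩

def gramMatrix {ι : Type*} (B : LinearMap.BilinForm R M) (a : ι → M) : Matrix ι ι R :=
  Matrix.of fun i j => B (a i) (a j)

open Matrix in
theorem apply_sum_smul_eq_gramMatrix_mulVec {ι : Type*} [Fintype ι] (B : LinearMap.BilinForm R M)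
    (a : ι → M) (x : ι → R) (i : ι) : B (a i) (∑ j, x j • a j) = (B.gramMatrix a *ᵥ x) i := by
  simp [gramMatrix, mulVec, dotProduct, mul_comm]

theorem apply_lie_swap {L : Type*} [LieRing L] [LieAlgebra R L] {B : LinearMap.BilinForm R L}
    (hinv : ∀ x y z : L, B ⁅x, y⁆ z = B x ⁅y, z⁆) (w u v : L) : B ⁅w, u⁆ v = -B ⁅w, v⁆ u := by
  rw [hinv, hinv, ← lie_skew u v, map_neg]

end LinearMap.BilinForm

open LinearMap.BilinForm

section QuadraticLieAlgebra

variable {g : Type*} [LieRing g] [LieAlgebra ℂ g] {B : LinearMap.BilinForm ℂ g}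

theorem one_le_dup_iff [Module.Finite ℂ g] (hnondeg : B.Nondegenerate) :
    1 ≤ dup B ↔ ∃ X0 : g, X0 ≠ 0 ∧ B X0 ∈ dupSubmodule B := by
  rw [dup, Nat.one_le_iff_ne_zero, Ne, Submodule.finrank_eq_zero, ← Ne, Submodule.ne_bot_iff]
  constructor
  · rintro ⟨α, hα, hα0⟩
    have hB : B ((B.toDual hnondeg).symm α) = α := (B.toDual hnondeg).apply_symm_apply α
    refine ⟨(B.toDual hnondeg).symm α, fun h => hα0 ?_, by rwa [hB]⟩
    rw [← hB, h, map_zero]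
  · rintro ⟨X0, hX0, hmem⟩
    exact ⟨B X0, hmem, fun h => hX0 (hnondeg.1 X0 fun Y => by rw [h, LinearMap.zero_apply])⟩

theorem lie_eq_of_mem_dupSubmodule (hsymm : ∀ x y : g, B x y = B y x)
    (hnondeg : B.Nondegenerate) (hinv : ∀ x y z : g, B ⁅x, y⁆ z = B x ⁅y, z⁆)
    {X0 Y0 : g} (hX0 : B X0 ∈ dupSubmodule B) (hY0 : B X0 Y0 = 1) (X Y : g) :
    ⁅X, Y⁆ = B X0 X • ⁅Y0, Y⁆ - B X0 Y • ⁅Y0, X⁆ + B ⁅Y0, X⁆ Y • X0 := by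
  refine sub_eq_zero.mp (hnondeg.1 _ fun V => ?_)
  have hdup := hX0 X Y V Y0
  have hswap : ∀ U W : g, B ⁅U, W⁆ Y0 = B ⁅Y0, U⁆ W := fun U W => by rw [hsymm, ← hinv]
  rw [hswap, hswap, hswap, hY0] at hdup
  simp only [map_sub, map_add, map_smul, LinearMap.sub_apply, LinearMap.add_apply,
    LinearMap.smul_apply, smul_eq_mul]
  linear_combination -hdup

theorem mem_dupSubmodule_of_lie_eq {X0 Y0 : g}
    (h : ∀ X Y : g, ⁅X, Y⁆ = B X0 X • ⁅Y0, Y⁆ - B X0 Y • ⁅Y0, X⁆ + B ⁅Y0, X⁆ Y • X0) :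
    B X0 ∈ dupSubmodule B := by
  have hI : ∀ X Y T : g, B ⁅X, Y⁆ T =
      B X0 X * B ⁅Y0, Y⁆ T - B X0 Y * B ⁅Y0, X⁆ T + B ⁅Y0, X⁆ Y * B X0 T := fun X Y T => by
    rw [h X Y]
    simp only [map_add, map_sub, map_smul, LinearMap.add_apply, LinearMap.sub_apply,
      LinearMap.smul_apply, smul_eq_mul]
  intro X Y Z T
  rw [hI Y Z T, hI X Z T, hI X Y T, hI X Y Z]
  ring

theorem isSolvable_of_lie_eq (hinv : ∀ x y z : g, B ⁅x, y⁆ z = B x ⁅y, z⁆) {X0 Y0 : g}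
    (hX0 : B X0 X0 = 0) (hY0 : ⁅Y0, X0⁆ = 0)
    (h : ∀ X Y : g, ⁅X, Y⁆ = B X0 X • ⁅Y0, Y⁆ - B X0 Y • ⁅Y0, X⁆ + B ⁅Y0, X⁆ Y • X0) :
    LieAlgebra.IsSolvable g := by
  have hαC : ∀ V : g, B X0 ⁅Y0, V⁆ = 0 := fun V => by
    rw [← hinv, ← lie_skew, hY0, neg_zero, map_zero, LinearMap.zero_apply]
  have hD1 := LieAlgebra.derivedSeries_succ_le (S := ⊤) (T := LinearMap.ker (B X0)) (k := 0)
    le_top fun x _ y _ => by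
      rw [LinearMap.mem_ker, h]
      simp only [map_add, map_sub, map_smul, smul_eq_mul, hαC, hX0]
      ring
  have hD2 := LieAlgebra.derivedSeries_succ_le (T := ℂ ∙ X0) hD1 fun x hx y hy => by
    rw [LinearMap.mem_ker] at hx hy
    rw [h, hx, hy, zero_smul, zero_smul, sub_zero, zero_add]
    exact Submodule.smul_mem _ _ (Submodule.mem_span_singleton_self X0)
  have hD3 := LieAlgebra.derivedSeries_succ_le (T := ⊥) hD2 fun x hx y hy => by
    obtain ⟨s, rfl⟩ := Submodule.mem_span_singleton.mp hx
    obtain ⟨t, rfl⟩ := Submodule.mem_span_singleton.mp hy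
    rw [smul_lie, lie_smul, lie_self, smul_zero, smul_zero]
    exact Submodule.zero_mem _
  refine LieAlgebra.IsSolvable.mk (R := ℂ) (k := 3) ?_
  rwa [← LieSubmodule.toSubmodule_eq_bot, ← le_bot_iff]

/-- The canonical 3-form `I(X,Y,T) = B([X,Y],T)` equals `B(a 0,·) ∧ B(a 1,·) ∧ B(a 2,·)`. -/
def IsDecomposable (B : LinearMap.BilinForm ℂ g) (a : Fin 3 → g) : Prop :=
  ∀ X Y T : g, B ⁅X, Y⁆ T = (Matrix.of fun i j => B (a i) (![X, Y, T] j)).det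

theorem isDecomposable_of_lie_eq {X0 Y0 u v : g}
    (h : ∀ X Y : g, ⁅X, Y⁆ = B X0 X • ⁅Y0, Y⁆ - B X0 Y • ⁅Y0, X⁆ + B ⁅Y0, X⁆ Y • X0)
    (hY0 : ∀ X : g, ⁅Y0, X⁆ = B u X • v - B v X • u) :
    IsDecomposable B ![X0, u, v] := by
  intro X Y T
  rw [h, Matrix.det_fin_three]
  simp only [hY0, map_add, map_sub, map_smul, LinearMap.add_apply, LinearMap.sub_apply,
    LinearMap.smul_apply, smul_eq_mul, Matrix.of_apply, Matrix.cons_val_zero, Matrix.cons_val_one,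
    Matrix.cons_val_two, Matrix.head_cons, Matrix.tail_cons]
  ring

namespace IsDecomposable

variable {a : Fin 3 → g}

theorem mem_dupSubmodule (ha : IsDecomposable B a) (x : Fin 3 → ℂ) :
    B (∑ i, x i • a i) ∈ dupSubmodule B := by
  have h : ∀ i, B (a i) ∈ dupSubmodule B := by
    intro i X Y Z T
    rw [ha Y Z T, ha X Z T, ha X Y T, ha X Y Z]
    simp only [Matrix.det_fin_three, Matrix.of_apply, Matrix.cons_val_zero,
      Matrix.cons_val_one, Matrix.cons_val_two, Matrix.head_cons, Matrix.tail_cons]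
    fin_cases i <;> simp only [Fin.zero_eta, Fin.mk_one, Fin.reduceFinMk] <;> ring
  rw [map_sum]
  exact Submodule.sum_mem _ fun i _ => by rw [map_smul]; exact Submodule.smul_mem _ _ (h i)

theorem lie_eq_zero (hnondeg : B.Nondegenerate) (ha : IsDecomposable B a) {x : Fin 3 → ℂ}
    (hx : x ≠ 0) (hxa : ∑ i, x i • a i = 0) (X Y : g) : ⁅X, Y⁆ = 0 := by
  refine hnondeg.1 _ fun T => ?_
  rw [ha, ← Matrix.exists_vecMul_eq_zero_iff]
  refine ⟨x, hx, funext fun j => ?_⟩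
  have := congrArg (B · (![X, Y, T] j)) hxa
  simpa [Matrix.vecMul, dotProduct, map_sum] using this

theorem lie_dualFamily_eq (hnondeg : B.Nondegenerate) (ha : IsDecomposable B a) {X : Fin 3 → g}
    (hX : ∀ i j, B (a i) (X j) = if i = j then 1 else 0) (k : Fin 3) :
    ⁅X (k + 1), X (k + 2)⁆ = a k := by
  refine sub_eq_zero.mp (hnondeg.1 _ fun T => ?_)
  rw [LinearMap.map_sub, LinearMap.sub_apply, ha, sub_eq_zero]
  fin_cases k <;> simp [Matrix.det_fin_three, hX]

open Matrix in
theorem eq_zero_of_det_ne_zero [LieAlgebra.IsSolvable g] (hnondeg : B.Nondegenerate)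
    (ha : IsDecomposable B a) (hG : (B.gramMatrix a).det ≠ 0) (k : Fin 3) : a k = 0 := by
  set X : Fin 3 → g := fun j => ∑ i, ((B.gramMatrix a)⁻¹ *ᵥ Pi.single j 1) i • a i
  have hX : ∀ i j, B (a i) (X j) = if i = j then 1 else 0 := by
    intro i j
    rw [apply_sum_smul_eq_gramMatrix_mulVec, mulVec_mulVec, mul_nonsing_inv _ (Ne.isUnit hG),
      one_mulVec, Pi.single_apply]
  set V := Submodule.span ℂ (Set.range a)
  have hXV : ∀ j, X j ∈ V := fun j =>
    Submodule.sum_mem _ fun i _ => Submodule.smul_mem _ _ (Submodule.subset_span ⟨i, rfl⟩)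
  have hV : V ≤ Submodule.span ℂ {z | ∃ x ∈ V, ∃ y ∈ V, ⁅x, y⁆ = z} := by
    rw [Submodule.span_le]
    rintro _ ⟨k, rfl⟩
    exact Submodule.subset_span ⟨_, hXV _, _, hXV _, ha.lie_dualFamily_eq hnondeg hX k⟩
  have hk : a k ∈ V := Submodule.subset_span ⟨k, rfl⟩
  rwa [LieAlgebra.eq_bot_of_le_span_lie hV, Submodule.mem_bot] at hk

open Matrix in
theorem exists_central_isotropic [LieAlgebra.IsSolvable g] (hnondeg : B.Nondegenerate)
    (hnonabelian : ¬ ∀ x y : g, ⁅x, y⁆ = 0) (ha : IsDecomposable B a) :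
    ∃ X1 : g, X1 ≠ 0 ∧ B X1 ∈ dupSubmodule B ∧ (∀ v : g, ⁅v, X1⁆ = 0) ∧ B X1 X1 = 0 := by
  by_cases hG : (B.gramMatrix a).det = 0
  · obtain ⟨x, hx, hGx⟩ := exists_mulVec_eq_zero_iff.mpr hG
    have horth : ∀ i, B (a i) (∑ j, x j • a j) = 0 := fun i => by
      rw [apply_sum_smul_eq_gramMatrix_mulVec, hGx, Pi.zero_apply]
    refine ⟨∑ j, x j • a j, fun h => hnonabelian (ha.lie_eq_zero hnondeg hx h),
      ha.mem_dupSubmodule x, fun v => hnondeg.1 _ fun T => ?_, ?_⟩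
    · rw [ha]
      exact det_eq_zero_of_column_eq_zero 1 fun i => by simp [horth]
    · rw [map_sum B, LinearMap.sum_apply]
      exact Finset.sum_eq_zero fun i _ => by rw [map_smul, LinearMap.smul_apply, horth, smul_zero]
  · have hzero := ha.eq_zero_of_det_ne_zero hnondeg hG
    exact absurd (ha.lie_eq_zero hnondeg (x := 1) one_ne_zero (by simp [hzero])) hnonabelian

end IsDecomposable

theorem lie_eq_smul_sub_smul (hsymm : ∀ x y : g, B x y = B y x)
    (hinv : ∀ x y z : g, B ⁅x, y⁆ z = B x ⁅y, z⁆) {X0 Y0 W : g}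
    (h : ∀ X Y : g, ⁅X, Y⁆ = B X0 X • ⁅Y0, Y⁆ - B X0 Y • ⁅Y0, X⁆ + B ⁅Y0, X⁆ Y • X0)
    (hW0 : B X0 W = 0) (hW1 : B ⁅Y0, X0⁆ W = 1) (X : g) :
    ⁅Y0, X⁆ = B ⁅Y0, X0⁆ X • ⁅Y0, W⁆ - B ⁅Y0, W⁆ X • ⁅Y0, X0⁆ := by
  have hαC : ∀ V : g, B X0 ⁅Y0, V⁆ = -B ⁅Y0, X0⁆ V := fun V => by
    rw [← hinv, ← lie_skew, map_neg, LinearMap.neg_apply]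
  have hΩ : B ⁅Y0, ⁅Y0, X⁆⁆ W = -B ⁅Y0, X⁆ ⁅Y0, W⁆ := by
    rw [apply_lie_swap hinv, hsymm]
  have hΩW : B ⁅Y0, X⁆ W = -B ⁅Y0, W⁆ X := apply_lie_swap hinv Y0 X W
  have jac := leibniz_lie Y0 X W
  rw [h X W, h ⁅Y0, X⁆ W, h X ⁅Y0, W⁆, hαC, hαC, hW0, hW1, hΩ, hΩW] at jac
  simp only [lie_add, lie_sub, lie_smul] at jac
  linear_combination (norm := module) -jac

theorem exists_isDecomposable_of_lie_ne_zero (hsymm : ∀ x y : g, B x y = B y x)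
    (hnondeg : B.Nondegenerate) (hinv : ∀ x y z : g, B ⁅x, y⁆ z = B x ⁅y, z⁆) {X0 Y0 : g}
    (hX0 : B X0 ∈ dupSubmodule B) (hY0 : B X0 Y0 = 1) (hZ : ⁅Y0, X0⁆ ≠ 0) :
    ∃ a, IsDecomposable B a := by
  have h := lie_eq_of_mem_dupSubmodule hsymm hnondeg hinv hX0 hY0
  obtain ⟨W, hW⟩ := exists_apply_eq_one hnondeg hZ
  have hZY0 : B ⁅Y0, X0⁆ Y0 = 0 := by
    rw [apply_lie_swap hinv, lie_self, map_zero, LinearMap.zero_apply, neg_zero]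
  have hC := lie_eq_smul_sub_smul hsymm hinv h (W := W - B X0 W • Y0)
    (by rw [map_sub, map_smul, hY0, smul_eq_mul, mul_one, sub_self])
    (by rw [map_sub, map_smul, hZY0, smul_zero, sub_zero, hW])
  exact ⟨_, isDecomposable_of_lie_eq h hC⟩

theorem exists_apply_eq_one_lie_ne_zero (hnondeg : B.Nondegenerate) {X0 : g} (hX0 : X0 ≠ 0)
    (hcent : ¬ ∀ v : g, ⁅v, X0⁆ = 0) : ∃ Y0 : g, B X0 Y0 = 1 ∧ ⁅Y0, X0⁆ ≠ 0 := by
  obtain ⟨Y1, hY1⟩ := exists_apply_eq_one hnondeg hX0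
  by_cases hZ : ⁅Y1, X0⁆ = 0
  · obtain ⟨v, hv⟩ := not_forall.mp hcent
    refine ⟨Y1 + v - B X0 v • Y1, ?_, ?_⟩
    · rw [map_sub, map_add, map_smul, hY1, smul_eq_mul, mul_one, add_sub_cancel_right]
    · rwa [sub_lie, add_lie, smul_lie, hZ, smul_zero, zero_add, sub_zero]
  · exact ⟨Y1, hY1, hZ⟩

theorem apply_self_eq_zero_of_central (hsymm : ∀ x y : g, B x y = B y x)
    (hnondeg : B.Nondegenerate) (hinv : ∀ x y z : g, B ⁅x, y⁆ z = B x ⁅y, z⁆)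
    (hnonabelian : ¬ ∀ x y : g, ⁅x, y⁆ = 0) {X0 : g} (hX0 : B X0 ∈ dupSubmodule B)
    (hne : X0 ≠ 0) (hcent : ∀ v : g, ⁅v, X0⁆ = 0) : B X0 X0 = 0 := by
  obtain ⟨Y0, hY0⟩ := exists_apply_eq_one hnondeg hne
  have h := lie_eq_of_mem_dupSubmodule hsymm hnondeg hinv hX0 hY0
  by_contra hq
  have hC : ∀ v : g, ⁅Y0, v⁆ = 0 := by
    intro v
    have hv := h v X0
    rw [hcent, apply_lie_swap hinv, hcent, map_zero, LinearMap.zero_apply, neg_zero, smul_zero,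
      zero_smul, add_zero, zero_sub, eq_comm, neg_eq_zero] at hv
    exact (smul_eq_zero.mp hv).resolve_left hq
  exact hnonabelian fun X Y => by rw [h, hC, hC, map_zero, LinearMap.zero_apply]; simp

theorem hasDoubleExtensionData_of_central (hsymm : ∀ x y : g, B x y = B y x)
    (hnondeg : B.Nondegenerate) (hinv : ∀ x y z : g, B ⁅x, y⁆ z = B x ⁅y, z⁆) {X0 : g}
    (hne : X0 ≠ 0) (hX0 : B X0 ∈ dupSubmodule B) (hcent : ∀ v : g, ⁅v, X0⁆ = 0)
    (hiso : B X0 X0 = 0) : HasDoubleExtensionData B := by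
  obtain ⟨Y, hY⟩ := exists_apply_eq_one hnondeg hne
  have hY0 : B X0 (Y - (B Y Y / 2) • X0) = 1 := by
    rw [map_sub, map_smul, hY, hiso, smul_zero, sub_zero]
  refine ⟨X0, Y - (B Y Y / 2) • X0, hiso, ?_, hY0, hcent _,
    lie_eq_of_mem_dupSubmodule hsymm hnondeg hinv hX0 hY0⟩
  simp only [map_sub, map_smul, LinearMap.sub_apply, LinearMap.smul_apply, smul_eq_mul, hiso, hY,
    hsymm Y X0]
  ring

end QuadraticLieAlgebra

/-- A non-Abelian quadratic Lie algebra is solvable and singular if and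
only if it admits double-extension data. -/
theorem solvable_singular_iff_double_extension
    {g : Type*} [LieRing g] [LieAlgebra ℂ g] [Module.Finite ℂ g]
    (B : LinearMap.BilinForm ℂ g)
    (hsymm : ∀ x y : g, B x y = B y x)
    (hnondeg : B.Nondegenerate)
    (hinv : ∀ x y z : g, B ⁅x, y⁆ z = B x ⁅y, z⁆)
    (hnonabelian : ¬ ∀ x y : g, ⁅x, y⁆ = 0) :
    (LieAlgebra.IsSolvable g ∧ 1 ≤ dup B) ↔ HasDoubleExtensionData B := by
  rw [one_le_dup_iff hnondeg]
  constructor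
  · rintro ⟨hsolv, X0, hne, hX0⟩
    obtain ⟨X1, hne1, hX1, hcent, hiso⟩ : ∃ X1 : g, X1 ≠ 0 ∧ B X1 ∈ dupSubmodule B ∧
        (∀ v : g, ⁅v, X1⁆ = 0) ∧ B X1 X1 = 0 := by
      by_cases hcent : ∀ v : g, ⁅v, X0⁆ = 0
      · exact ⟨X0, hne, hX0, hcent,
          apply_self_eq_zero_of_central hsymm hnondeg hinv hnonabelian hX0 hne hcent⟩
      · obtain ⟨Y0, hY0, hZ⟩ := exists_apply_eq_one_lie_ne_zero hnondeg hne hcent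
        obtain ⟨a, ha⟩ := exists_isDecomposable_of_lie_ne_zero hsymm hnondeg hinv hX0 hY0 hZ
        exact ha.exists_central_isotropic hnondeg hnonabelian
    exact hasDoubleExtensionData_of_central hsymm hnondeg hinv hne1 hX1 hcent hiso
  · rintro ⟨X0, Y0, hX0, -, hY0, hZ, h⟩
    refine ⟨isSolvable_of_lie_eq hinv hX0 hZ h, X0, fun h0 => ?_, mem_dupSubmodule_of_lie_eq h⟩
    rw [h0, map_zero, LinearMap.zero_apply] at hY0
    exact zero_ne_one hY0
end

section
/- Let (g,B) be a quadratic Lie algebra admitting double-extension data (X0,Y0). Then g is a nilpotent Lie algebra if and only if the adjoint endomorphism ad(Y0) : g → g, x ↦ [Y0,x], is nilpotent. -/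
/-!
The bracket formula makes `X0` central, so by invariance `B X0` vanishes on `[g, g]`; there
`ad X` acts as `B X0 X • ad Y0` up to a multiple of the central `X0`, hence
`(ad X) ^ (k + 2) = (B X0 X) ^ k • ad X ∘ (ad Y0) ^ k ∘ ad X`. So `ad X` is nilpotent as soon
as `ad Y0` is, and Engel's theorem concludes.
-/

theorem LinearMap.BilinForm.apply_lie_eq_zero_of_forall_lie_eq_zero
    {R L : Type*} [CommRing R] [LieRing L] [LieAlgebra R L] (B : LinearMap.BilinForm R L)
    (hinv : ∀ x y z : L, B ⁅x, y⁆ z = B x ⁅y, z⁆) {z : L} (hz : ∀ x : L, ⁅z, x⁆ = 0) (x y : L) :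
    B z ⁅x, y⁆ = 0 := by
  rw [← hinv, hz, map_zero, LinearMap.zero_apply]

namespace DoubleExtension

variable {R L : Type*} [CommRing R] [LieRing L] [LieAlgebra R L] {B : LinearMap.BilinForm R L}
  {X0 Y0 : L}
  (hbracket : ∀ X Y : L, ⁅X, Y⁆ = B X0 X • ⁅Y0, Y⁆ - B X0 Y • ⁅Y0, X⁆ + B ⁅Y0, X⁆ Y • X0)
include hbracket

theorem lie_X0_eq_zero (hX0 : B X0 X0 = 0) (hYX : ⁅Y0, X0⁆ = 0) (Z : L) : ⁅X0, Z⁆ = 0 := by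
  rw [hbracket X0 Z, hX0, hYX]
  simp

theorem lie_eq_of_apply_eq_zero (X : L) {Y : L} (hY : B X0 Y = 0) :
    ⁅X, Y⁆ = B X0 X • ⁅Y0, Y⁆ + B ⁅Y0, X⁆ Y • X0 := by
  rw [hbracket X Y, hY, zero_smul, sub_zero]

theorem lie_lie_eq_smul_lie_lie (hX0 : B X0 X0 = 0) (hYX : ⁅Y0, X0⁆ = 0) (X : L) {Y : L}
    (hY : B X0 Y = 0) : ⁅X, ⁅X, Y⁆⁆ = B X0 X • ⁅X, ⁅Y0, Y⁆⁆ := by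
  have hX0_central : ⁅X, X0⁆ = 0 := by
    rw [← lie_skew, lie_X0_eq_zero hbracket hX0 hYX, neg_zero]
  rw [lie_eq_of_apply_eq_zero hbracket X hY, lie_add, lie_smul, lie_smul, hX0_central, smul_zero,
    add_zero]

variable (hinv : ∀ x y z : L, B ⁅x, y⁆ z = B x ⁅y, z⁆) (hX0 : B X0 X0 = 0) (hYX : ⁅Y0, X0⁆ = 0)
include hinv hX0 hYX

theorem apply_lie_eq_zero (X Y : L) : B X0 ⁅X, Y⁆ = 0 :=
  LinearMap.BilinForm.apply_lie_eq_zero_of_forall_lie_eq_zero B hinv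
    (lie_X0_eq_zero hbracket hX0 hYX) X Y

theorem ad_pow_succ_apply (X : L) {Y : L} (hY : B X0 Y = 0) (k : ℕ) :
    (LieAlgebra.ad R L X ^ (k + 1)) Y = B X0 X ^ k • ⁅X, (LieAlgebra.ad R L Y0 ^ k) Y⁆ := by
  induction k with
  | zero => simp
  | succ k ih =>
    have hDk : B X0 ((LieAlgebra.ad R L Y0 ^ k) Y) = 0 := by
      cases k with
      | zero => simpa using hY
      | succ m =>
        rw [pow_succ', Module.End.mul_apply, LieAlgebra.ad_apply]
        exact apply_lie_eq_zero hbracket hinv hX0 hYX _ _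
    rw [pow_succ', Module.End.mul_apply, ih, map_smul, LieAlgebra.ad_apply,
      lie_lie_eq_smul_lie_lie hbracket hX0 hYX X hDk, smul_smul, ← pow_succ,
      pow_succ' (LieAlgebra.ad R L Y0), Module.End.mul_apply, LieAlgebra.ad_apply]

theorem isNilpotent_ad (hD : IsNilpotent (LieAlgebra.ad R L Y0)) (X : L) :
    IsNilpotent (LieAlgebra.ad R L X) := by
  obtain ⟨n, hn⟩ := hD
  refine ⟨n + 2, LinearMap.ext fun Y => ?_⟩
  have hXY : B X0 ⁅X, Y⁆ = 0 := apply_lie_eq_zero hbracket hinv hX0 hYX X Y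
  rw [pow_succ, Module.End.mul_apply, LieAlgebra.ad_apply,
    ad_pow_succ_apply hbracket hinv hX0 hYX X hXY n, hn]
  simp

end DoubleExtension

theorem nilpotent_iff_ad_nilpotent_general
    {g : Type*} [LieRing g] [LieAlgebra ℂ g] [Module.Finite ℂ g]
    (B : LinearMap.BilinForm ℂ g)
    (hinv : ∀ x y z : g, B ⁅x, y⁆ z = B x ⁅y, z⁆)
    (X0 Y0 : g)
    (hX0 : B X0 X0 = 0)
    (hYX : ⁅Y0, X0⁆ = 0)
    (hbracket : ∀ X Y : g,
      ⁅X, Y⁆ = B X0 X • ⁅Y0, Y⁆ - B X0 Y • ⁅Y0, X⁆ + B ⁅Y0, X⁆ Y • X0) :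
    LieRing.IsNilpotent g ↔ IsNilpotent (LieAlgebra.ad ℂ g Y0) := by
  rw [LieAlgebra.isNilpotent_iff_forall (R := ℂ)]
  exact ⟨fun h => h Y0, DoubleExtension.isNilpotent_ad hbracket hinv hX0 hYX⟩

/-- Let `(g,B)` be a quadratic Lie algebra with double-extension data
`(X0,Y0)`. Then `g` is nilpotent if and only if `ad(Y0)` is a nilpotent endomorphism. -/
theorem nilpotent_iff_ad_nilpotent
    {g : Type*} [LieRing g] [LieAlgebra ℂ g] [Module.Finite ℂ g]
    (B : LinearMap.BilinForm ℂ g)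
    (hsymm : ∀ x y : g, B x y = B y x)
    (hnondeg : B.Nondegenerate)
    (hinv : ∀ x y z : g, B ⁅x, y⁆ z = B x ⁅y, z⁆)
    (X0 Y0 : g)
    (hX0 : B X0 X0 = 0) (hY0 : B Y0 Y0 = 0) (hXY : B X0 Y0 = 1)
    (hYX : ⁅Y0, X0⁆ = 0)
    (hbracket : ∀ X Y : g,
      ⁅X, Y⁆ = B X0 X • ⁅Y0, Y⁆ - B X0 Y • ⁅Y0, X⁆ + B ⁅Y0, X⁆ Y • X0) :
    LieRing.IsNilpotent g ↔ IsNilpotent (LieAlgebra.ad ℂ g Y0) :=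
  nilpotent_iff_ad_nilpotent_general B hinv X0 Y0 hX0 hYX hbracket
end

section
/- Let C be a nilpotent complex n×n matrix with Cᵀ = −C and let λ be a nonzero complex number. Then there exists a complex n×n matrix U with Uᵀ·U = 1 such that U·C·U⁻¹ = λ·C. Consequently, for nilpotent C, C' in o(n,ℂ), C is O(n,ℂ)-conjugate to λ·C' for some nonzero λ if and only if C is O(n,ℂ)-conjugate to C'. -/
/-!
The `K[X]`-module given by a nilpotent `C` is a direct sum of cyclic modules `K[X] ⧸ (p ^ e)`
with `p ^ e ∣ X ^ m`. The substitution `X ↦ λX` maps each ideal `(p ^ e)` onto itself, so it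
induces a semilinear automorphism of the module, i.e. an invertible `G` with `G C = λ C G`.
When `C` is skew-symmetric, `S = Gᵀ G` commutes with `C`. Modulo each `(X - a) ^ k` with
`a ≠ 0`, Hensel lifting gives a square root of `X`; the Chinese remainder theorem glues these
into `q` with `q ^ 2 ≡ X` modulo the characteristic polynomial of `S`. Hence `T = q(S)` is a
symmetric square root of `S` commuting with `C`, and `U = G T⁻¹` is orthogonal with
`U C U⁻¹ = λ C`. The second statement follows by composing conjugations.
-/

open Polynomial Matrix

section

variable {K : Type*} [Field K]

theorem exists_mul_dvd_sq_sub_of_isCoprime {R : Type*} [CommRing R] {f g x : R}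
    (hfg : IsCoprime f g) (hf : ∃ q, f ∣ q ^ 2 - x) (hg : ∃ q, g ∣ q ^ 2 - x) :
    ∃ q, f * g ∣ q ^ 2 - x := by
  obtain ⟨q₁, hq₁⟩ := hf
  obtain ⟨q₂, hq₂⟩ := hg
  have ⟨u, v, huv⟩ := hfg
  have lift (d q₀ q : R) (h : d ∣ q - q₀) (h₀ : d ∣ q₀ ^ 2 - x) : d ∣ q ^ 2 - x := by
    convert (h.mul_right (q + q₀)).add h₀ using 1; ring
  refine ⟨q₁ * (v * g) + q₂ * (u * f),
    hfg.mul_dvd (lift _ q₁ _ ?_ hq₁) (lift _ q₂ _ ?_ hq₂)⟩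
  · exact ⟨(q₂ - q₁) * u, by linear_combination q₁ * huv⟩
  · exact ⟨(q₁ - q₂) * v, by linear_combination q₂ * huv⟩

theorem Commute.aeval_left {A : Type*} [Ring A] [Algebra K A] {x y : A} (h : Commute x y)
    (p : K[X]) : Commute (aeval x p) y := by
  induction p using Polynomial.induction_on' with
  | add p q hp hq => simpa using hp.add_left hq
  | monomial n c => simpa [aeval_monomial, ← Algebra.smul_def] using (h.pow_left n).smul_left c

theorem Matrix.IsSymm.aeval {ι : Type*} [Fintype ι] [DecidableEq ι] {S : Matrix ι ι K}
    (hS : S.IsSymm) (p : K[X]) : (aeval S p).IsSymm := by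
  induction p using Polynomial.induction_on' with
  | add p q hp hq => simpa using hp.add hq
  | monomial n c => simpa [aeval_monomial, ← Algebra.smul_def] using (hS.pow n).smul c

variable [IsAlgClosed K] [NeZero (2 : K)]

theorem exists_X_sub_C_pow_dvd_sq_sub_X {a : K} (ha : a ≠ 0) (k : ℕ) :
    ∃ q : K[X], (X - C a) ^ k ∣ q ^ 2 - X := by
  rcases k.eq_zero_or_pos with rfl | hk
  · exact ⟨0, by simp⟩
  induction k, hk using Nat.le_induction with
  | base =>
    obtain ⟨b, hb⟩ := IsAlgClosed.exists_pow_nat_eq a two_pos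
    exact ⟨C b, by simp [dvd_iff_isRoot, hb]⟩
  | succ k hk ih =>
    have hk0 : (0 : K) ^ k = 0 := zero_pow (by omega)
    obtain ⟨q, r, hr⟩ := ih
    have hqa : q.eval a ^ 2 = a := by
      have := congr_arg (eval a) hr
      simp only [eval_sub, eval_pow, eval_X, eval_mul, eval_C, sub_self, hk0, zero_mul] at this
      exact sub_eq_zero.1 this
    have hq : q.eval a ≠ 0 := fun h => ha (by rw [← hqa, h]; ring)
    -- Newton step: correct `q` by a multiple of `(X - a) ^ k` killing the next coefficient.
    set c := -r.eval a / (2 * q.eval a) with hc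
    refine ⟨q + C c * (X - C a) ^ k, ?_⟩
    have : (q + C c * (X - C a) ^ k) ^ 2 - X
        = (X - C a) ^ k * (r + 2 * C c * q + C c ^ 2 * (X - C a) ^ k) := by
      linear_combination hr
    rw [this, pow_succ]
    refine mul_dvd_mul_left _ (dvd_iff_isRoot.2 ?_)
    simp only [IsRoot, eval_add, eval_mul, eval_pow, eval_C, eval_sub, eval_X, sub_self, hk0,
      mul_zero, add_zero, eval_ofNat]
    rw [hc]; field_simp; ring

theorem exists_dvd_sq_sub_X {μ : K[X]} (hμ : μ.eval 0 ≠ 0) :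
    ∃ q : K[X], μ ∣ q ^ 2 - X := by
  induction μ using UniqueFactorizationMonoid.induction_on_coprime with
  | h0 => simp at hμ
  | h1 hu => exact ⟨0, hu.dvd⟩
  | @hpr p i hp =>
    obtain ⟨a, ha⟩ := IsAlgClosed.exists_root _ (degree_pos_of_irreducible hp.irreducible).ne'
    have hpa : Associated (X - C a) p :=
      (irreducible_X_sub_C a).associated_of_dvd hp.irreducible (dvd_iff_isRoot.2 ha)
    rcases i.eq_zero_or_pos with rfl | hi
    · exact ⟨0, by simp⟩
    have ha0 : a ≠ 0 := by
      rintro rfl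
      exact hμ (by rw [eval_pow, ha.eq_zero, zero_pow hi.ne'])
    obtain ⟨q, hq⟩ := exists_X_sub_C_pow_dvd_sq_sub_X ha0 i
    exact ⟨q, (hpa.pow_pow (n := i)).dvd_iff_dvd_left.1 hq⟩
  | hcp hxy hx hy =>
    rw [eval_mul] at hμ
    exact exists_mul_dvd_sq_sub_of_isCoprime hxy.isCoprime (hx (left_ne_zero_of_mul hμ))
      (hy (right_ne_zero_of_mul hμ))

theorem exists_aeval_sq_eq {A : Type*} [Ring A] [Algebra K A] {x : A} {μ : K[X]}
    (hx : aeval x μ = 0) (hμ : μ.eval 0 ≠ 0) : ∃ q : K[X], aeval x q ^ 2 = x := by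
  obtain ⟨q, r, hr⟩ := exists_dvd_sq_sub_X hμ
  refine ⟨q, sub_eq_zero.1 ?_⟩
  simpa [hx] using congr_arg (aeval x) hr

namespace Matrix

variable {ι : Type*} [Fintype ι] [DecidableEq ι]

theorem exists_aeval_sq_eq_of_isUnit {S : Matrix ι ι K} (hS : IsUnit S) :
    ∃ q : K[X], aeval S q ^ 2 = S := by
  refine exists_aeval_sq_eq (aeval_self_charpoly S) ?_
  rw [← coeff_zero_eq_eval_zero]
  intro h
  have := S.det_eq_sign_charpoly_coeff
  rw [h, mul_zero] at this
  exact ((isUnit_iff_isUnit_det S).1 hS).ne_zero this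

theorem exists_orthogonal_conj_eq_of_mul_eq_mul {C D G : Matrix ι ι K} (hC : Cᵀ = -C)
    (hD : Dᵀ = -D) (hG : IsUnit G) (hGC : G * C = D * G) :
    ∃ U : Matrix ι ι K, Uᵀ * U = 1 ∧ U * C * U⁻¹ = D := by
  have hCG : C * Gᵀ = Gᵀ * D := by
    simpa [hC, hD] using congr_arg transpose hGC
  have hS : Commute (Gᵀ * G) C := by
    rw [Commute, SemiconjBy, mul_assoc, hGC, ← mul_assoc, ← hCG, mul_assoc]
  have hGG : IsUnit (Gᵀ * G) := ((isUnit_transpose G).2 hG).mul hG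
  obtain ⟨q, hq⟩ := exists_aeval_sq_eq_of_isUnit hGG
  set T := aeval (Gᵀ * G) q
  have hT : IsUnit T.det := by
    rw [← isUnit_iff_isUnit_det]
    exact ((Commute.refl T).isUnit_mul_iff.1 (by rwa [← sq, hq])).1
  have hTt : Tᵀ = T := ((isSymm_transpose_mul_self G).aeval q).eq
  have hTC : T⁻¹ * C = C * T⁻¹ := by
    calc T⁻¹ * C = T⁻¹ * (C * T) * T⁻¹ := by
          rw [← mul_assoc, mul_nonsing_inv_cancel_right T _ hT]
      _ = C * T⁻¹ := by rw [← (hS.aeval_left q).eq, nonsing_inv_mul_cancel_left T _ hT]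
  have hU : IsUnit (G * T⁻¹).det := by
    rw [det_mul]; exact ((isUnit_iff_isUnit_det G).1 hG).mul (isUnit_nonsing_inv_det T hT)
  refine ⟨G * T⁻¹, ?_, ?_⟩
  · rw [transpose_mul, transpose_nonsing_inv, hTt, mul_assoc, ← mul_assoc Gᵀ, ← hq, sq,
      ← mul_assoc, nonsing_inv_mul_cancel_left T _ hT, mul_nonsing_inv T hT]
  · rw [mul_assoc G, hTC, ← mul_assoc, hGC, mul_assoc D, mul_nonsing_inv_cancel_right _ _ hU]

end Matrix

end

theorem exists_linearEquiv_map_smul_eq_of_span_eq {R A ι M : Type*} [CommRing R] [CommRing A]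
    [Algebra R A] [AddCommGroup M] [Module A M] [Module R M] [IsScalarTower R A M]
    (σ : A ≃ₐ[R] A) {a : ι → A} (ha : ∀ i, Ideal.span {σ (a i)} = Ideal.span {a i})
    (e : M ≃ₗ[A] Π i, A ⧸ Ideal.span {a i}) :
    ∃ g : M ≃ₗ[R] M, ∀ (r : A) (x : M), g (r • x) = σ r • g x := by
  let τ : Π i, (A ⧸ Ideal.span {a i}) ≃ₐ[R] A ⧸ Ideal.span {a i} := fun i =>
    Ideal.quotientEquivAlg _ _ σ (by rw [Ideal.map_span, Set.image_singleton]; exact (ha i).symm)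
  let T := LinearEquiv.piCongrRight fun i => (τ i).toLinearEquiv
  have hT (r : A) (y : Π i, A ⧸ Ideal.span {a i}) : T (r • y) = σ r • T y := by
    ext i
    simp [T, Algebra.smul_def, τ]
  refine ⟨(e.restrictScalars R).trans (T.trans (e.symm.restrictScalars R)), fun r x => ?_⟩
  simp [hT]

theorem span_singleton_algEquivCMulXAddC_of_dvd_X_pow {K : Type*} [Field K] {c : K}
    [Invertible c] {p : K[X]} {m : ℕ} (h : p ∣ X ^ m) :
    Ideal.span {algEquivCMulXAddC c 0 p} = Ideal.span {p} := by
  set σ := algEquivCMulXAddC c 0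
  obtain ⟨i, -, hpX⟩ := (dvd_prime_pow prime_X m).1 h
  obtain ⟨u, hu⟩ := id hpX
  have hσp : Associated (σ p) (σ (X ^ i)) :=
    ⟨Units.map σ.toMonoidHom u, by simp [← map_mul, ← hu]⟩
  have hσX : Associated (σ (X ^ i)) (X ^ i) := by
    have : σ (X ^ i) = C (c ^ i) * X ^ i := by simp [σ, mul_pow]
    rw [this]
    exact associated_unit_mul_left _ _ (isUnit_C.2 ((isUnit_of_invertible c).pow i))
  rw [Ideal.span_singleton_eq_span_singleton]
  exact hσp.trans (hσX.trans hpX.symm)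

theorem Module.End.exists_linearEquiv_apply_eq_smul_of_isNilpotent {K V : Type*} [Field K]
    [AddCommGroup V] [Module K V] [Module.Finite K V] {f : Module.End K V} (hf : IsNilpotent f)
    {c : K} (hc : c ≠ 0) : ∃ g : V ≃ₗ[K] V, ∀ v, g (f v) = c • f (g v) := by
  obtain ⟨m, hm⟩ := hf
  have hX : Module.IsTorsionBy K[X] (Module.AEval' f) (X ^ m) := fun x => by
    rw [← (Module.AEval'.of f).apply_symm_apply x, Module.AEval'.X_pow_smul_of, hm]
    simp
  have htors : Module.IsTorsion K[X] (Module.AEval' f) := fun x =>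
    ⟨⟨X ^ m, mem_nonZeroDivisors_of_ne_zero (pow_ne_zero _ X_ne_zero)⟩, @hX x⟩
  obtain ⟨ι, _, p, -, e, ⟨φ⟩⟩ := Module.equiv_directSum_of_isTorsion htors
  let ψ := φ.trans (DirectSum.linearEquivFunOnFintype K[X] ι _)
  have hdvd (i : ι) : p i ^ e i ∣ X ^ m := by
    classical
    have h := congr_arg (fun y => ψ y i) (@hX (ψ.symm (Pi.single i 1)))
    rw [← Ideal.mem_span_singleton, ← Ideal.Quotient.eq_zero_iff_mem]
    simpa [Algebra.smul_def] using h
  let := invertibleOfNonzero hc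
  obtain ⟨g, hg⟩ := exists_linearEquiv_map_smul_eq_of_span_eq (algEquivCMulXAddC c 0)
    (fun i => span_singleton_algEquivCMulXAddC_of_dvd_X_pow (hdvd i)) ψ
  refine ⟨(Module.AEval'.of f).trans (g.trans (Module.AEval'.of f).symm), fun v => ?_⟩
  simp [← Module.AEval'.X_smul_of, hg]

theorem Matrix.exists_isUnit_mul_eq_smul_mul_of_isNilpotent {K ι : Type*} [Field K] [Fintype ι]
    [DecidableEq ι] {C : Matrix ι ι K} (hC : IsNilpotent C) {c : K} (hc : c ≠ 0) :
    ∃ G : Matrix ι ι K, IsUnit G ∧ G * C = c • C * G := by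
  obtain ⟨g, hg⟩ :=
    Module.End.exists_linearEquiv_apply_eq_smul_of_isNilpotent (hC.map toLinAlgEquiv') hc
  refine ⟨toLinAlgEquiv'.symm g, (Module.End.isUnit_iff _ |>.2 g.bijective).map _, ?_⟩
  apply toLinAlgEquiv'.injective
  refine LinearMap.ext fun v => ?_
  simpa [smul_mulVec] using hg v

theorem Matrix.exists_orthogonal_conj_eq_smul_of_isNilpotent {K ι : Type*} [Field K]
    [IsAlgClosed K] [NeZero (2 : K)] [Fintype ι] [DecidableEq ι] {C : Matrix ι ι K}
    (hC : IsNilpotent C) (hskew : Cᵀ = -C) {c : K} (hc : c ≠ 0) :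
    ∃ U : Matrix ι ι K, Uᵀ * U = 1 ∧ U * C * U⁻¹ = c • C := by
  obtain ⟨G, hG, hGC⟩ := exists_isUnit_mul_eq_smul_mul_of_isNilpotent hC hc
  exact exists_orthogonal_conj_eq_of_mul_eq_mul hskew (by simp [hskew]) hG hGC

/-- A nonzero multiple `λ • C` of a nilpotent skew-symmetric complex
matrix `C` is conjugate to `C` by a complex orthogonal matrix; consequently two nilpotent
elements of `o(n,ℂ)` are `O(n,ℂ)`-conjugate up to a nonzero scalar if and only if they
are `O(n,ℂ)`-conjugate. -/
theorem nilpotent_skew_conjugate_scalar (n : ℕ) :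
    (∀ C : Matrix (Fin n) (Fin n) ℂ, IsNilpotent C → Cᵀ = -C →
      ∀ lam : ℂ, lam ≠ 0 →
        ∃ U : Matrix (Fin n) (Fin n) ℂ, Uᵀ * U = 1 ∧ U * C * U⁻¹ = lam • C) ∧
    (∀ C C' : Matrix (Fin n) (Fin n) ℂ, IsNilpotent C → IsNilpotent C' →
      Cᵀ = -C → C'ᵀ = -C' →
      ((∃ lam : ℂ, lam ≠ 0 ∧
          ∃ U : Matrix (Fin n) (Fin n) ℂ, Uᵀ * U = 1 ∧ C = U * (lam • C') * U⁻¹) ↔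
        (∃ U : Matrix (Fin n) (Fin n) ℂ, Uᵀ * U = 1 ∧ C = U * C' * U⁻¹))) := by
  refine ⟨fun C hC hskew lam hlam => exists_orthogonal_conj_eq_smul_of_isNilpotent hC hskew hlam,
    fun C C' _ hC' _ hskew' => ⟨?_, ?_⟩⟩
  · rintro ⟨lam, hlam, U, hU, rfl⟩
    obtain ⟨V, hV, hVC⟩ := exists_orthogonal_conj_eq_smul_of_isNilpotent hC' hskew' hlam
    refine ⟨U * V, ?_, ?_⟩
    · rw [transpose_mul, mul_assoc, ← mul_assoc Uᵀ, hU, one_mul, hV]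
    · rw [← hVC, Matrix.mul_inv_rev]
      simp only [mul_assoc]
  · rintro ⟨U, hU, rfl⟩
    exact ⟨1, one_ne_zero, U, hU, by rw [one_smul]⟩
end

section
/- Let C and C' be complex n×n matrices with Cᵀ = −C and C'ᵀ = −C'. Then the following are equivalent: (i) there exist an invertible complex n×n matrix P and a nonzero λ in ℂ such that C' = λ·P·C·P⁻¹ and Pᵀ·P·C = C; (ii) there exist a complex n×n matrix U with Uᵀ·U = 1 and a nonzero μ in ℂ such that C' = μ·U·C·U⁻¹. -/
/-!
If `Pᵀ P C = C`, then `M = Pᵀ P` is a symmetric invertible matrix fixing `C`. Taking a square root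
`S = q(M)` of `M` that is a polynomial in `M` with `q(1) = 1`, `S` is again symmetric and fixes `C`
on the left, hence (by skew-symmetry of `C`) also on the right, so `U = P S⁻¹` is orthogonal and
`U C U⁻¹ = P C P⁻¹`. Such a `q` exists since `X` has a square root modulo the characteristic
polynomial of `M`: interpolate square roots at the (nonzero) eigenvalues and lift by Newton's
iteration `q ↦ q - (q² - X) / (2q)`, which doubles the order of vanishing at each eigenvalue.
-/

open Matrix Polynomial

section Hensel

variable {R : Type*} [CommRing R] {x q r : R}

theorem exists_sq_sub_dvd_sq_of_dvd (h2 : IsUnit (2 : R)) (hq : r ∣ q ^ 2 - x)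
    (hqr : IsCoprime q r) : ∃ q', r ^ 2 ∣ q' ^ 2 - x ∧ r ∣ q' - q := by
  obtain ⟨t, ht⟩ := hq
  obtain ⟨u, v, huv⟩ := hqr
  obtain ⟨w, hw⟩ := h2.exists_right_inv
  -- Newton's step, with `u` an inverse of `q` and `w` one of `2` modulo `r`
  refine ⟨q - w * u * r * t, ⟨t * v + w ^ 2 * u ^ 2 * t ^ 2, ?_⟩, ⟨-(w * u * t), by ring⟩⟩
  linear_combination ht - r * t * huv - r * t * u * q * hw

theorem exists_sq_sub_dvd_pow_two_pow (h2 : IsUnit (2 : R)) (hq : r ∣ q ^ 2 - x)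
    (hqr : IsCoprime q r) (j : ℕ) : ∃ q', r ^ 2 ^ j ∣ q' ^ 2 - x ∧ r ∣ q' - q := by
  induction j with
  | zero => exact ⟨q, by simpa using hq, by simp⟩
  | succ j ih =>
    obtain ⟨q₁, hq₁, hq₁q⟩ := ih
    have hq₁r : IsCoprime q₁ r := by
      obtain ⟨s, hs⟩ := hq₁q
      simpa [show q₁ = q + r * s by linear_combination hs] using hqr.add_mul_left_left s
    obtain ⟨q₂, hq₂, hq₂q₁⟩ := exists_sq_sub_dvd_sq_of_dvd h2 hq₁ hq₁r.pow_right
    refine ⟨q₂, by rwa [pow_succ, pow_mul], ?_⟩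
    have hr : r ∣ q₂ - q₁ := (dvd_pow_self r (pow_ne_zero _ two_ne_zero)).trans hq₂q₁
    exact sub_add_sub_cancel q₂ q₁ q ▸ dvd_add hr hq₁q

end Hensel

namespace Polynomial

variable {K : Type*} [Field K] [IsAlgClosed K]

theorem dvd_prod_roots_X_sub_C_pow_natDegree [DecidableEq K] {p : K[X]} (hp : p ≠ 0) :
    p ∣ (∏ a ∈ p.roots.toFinset, (X - C a)) ^ p.natDegree := by
  conv_lhs =>
    rw [← C_leadingCoeff_mul_prod_multiset_X_sub_C (p := p) IsAlgClosed.card_roots_eq_natDegree]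
  rw [C_mul_dvd (leadingCoeff_ne_zero.2 hp), Finset.prod_multiset_map_count, ← Finset.prod_pow]
  exact Finset.prod_dvd_prod_of_dvd _ _ fun a _ =>
    pow_dvd_pow _ ((Multiset.count_le_card a _).trans (card_roots' p))

theorem exists_sq_sub_X_dvd (h2 : (2 : K) ≠ 0) {p : K[X]} (hp : ¬p.IsRoot 0) (f : K → K)
    (hf : ∀ a, p.IsRoot a → f a ^ 2 = a) :
    ∃ q : K[X], p ∣ q ^ 2 - X ∧ ∀ a, p.IsRoot a → q.eval a = f a := by
  classical
  have hp0 : p ≠ 0 := by rintro rfl; exact hp (by simp)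
  set s := p.roots.toFinset
  have hs : ∀ {a}, a ∈ s ↔ p.IsRoot a := by simp [s, mem_roots hp0]
  obtain ⟨q₀, hq₀⟩ : ∃ q₀ : K[X], ∀ a ∈ s, q₀.eval a = f a :=
    ⟨_, fun a ha => Lagrange.eval_interpolate_at_node (v := id) f (Set.injOn_id _) ha⟩
  set r := ∏ a ∈ s, (X - C a)
  have hr : r ∣ q₀ ^ 2 - X :=
    Finset.prod_dvd_of_coprime ((pairwise_coprime_X_sub_C Function.injective_id).set_pairwise _)
      fun a ha => by simp [dvd_iff_isRoot, hq₀ a ha, hf a (hs.1 ha)]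
  have hq₀r : IsCoprime q₀ r := IsCoprime.prod_right fun a ha => by
    refine ((irreducible_X_sub_C a).coprime_iff_not_dvd.2 ?_).symm
    have ha0 : a ≠ 0 := fun h => hp (h ▸ hs.1 ha)
    have hfa : f a ≠ 0 := fun h => ha0 (by rw [← hf a (hs.1 ha), h, zero_pow two_ne_zero])
    simpa [dvd_iff_isRoot, hq₀ a ha] using hfa
  have h2' : IsUnit (2 : K[X]) := by rw [← map_ofNat C 2]; exact isUnit_C.2 h2.isUnit
  obtain ⟨q, hq, hqq₀⟩ := exists_sq_sub_dvd_pow_two_pow h2' hr hq₀r p.natDegree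
  refine ⟨q, (dvd_prod_roots_X_sub_C_pow_natDegree hp0).trans
    ((pow_dvd_pow _ Nat.lt_two_pow_self.le).trans hq), fun a ha => ?_⟩
  have hqa : X - C a ∣ q - q₀ := (Finset.dvd_prod_of_mem (fun b => X - C b) (hs.2 ha)).trans hqq₀
  rw [dvd_iff_isRoot, IsRoot, eval_sub, sub_eq_zero] at hqa
  rw [hqa, hq₀ a (hs.2 ha)]

theorem aeval_mul_eq_eval_smul {R A : Type*} [CommSemiring R] [Semiring A]
    [Algebra R A] {a c : A} {μ : R} (h : a * c = μ • c) (p : R[X]) :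
    aeval a p * c = p.eval μ • c := by
  have hpow : ∀ k : ℕ, a ^ k * c = μ ^ k • c := fun k => by
    induction k with
    | zero => simp
    | succ k ih => rw [pow_succ', mul_assoc, ih, mul_smul_comm, h, smul_smul, pow_succ]
  induction p using Polynomial.induction_on' with
  | add p q hp hq => rw [map_add, add_mul, hp, hq, eval_add, add_smul]
  | monomial k b =>
    rw [aeval_monomial, mul_assoc, hpow, ← Algebra.smul_def, smul_smul, eval_monomial]

end Polynomial

namespace Matrix

variable {n : Type*} [Fintype n] [DecidableEq n]

theorem transpose_aeval {R α : Type*} [CommSemiring R] [CommSemiring α] [Algebra R α]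
    (M : Matrix n n α) (p : R[X]) : (aeval M p)ᵀ = aeval Mᵀ p :=
  MulOpposite.op_injective <| by
    rw [← aeval_op_apply, ← transposeAlgEquiv_apply n R, ← transposeAlgEquiv_apply n R,
      aeval_algHom_apply]

theorem exists_symm_sqrt_mul_eq_self {M C : Matrix n n ℂ} (hM : Mᵀ = M) (hdet : IsUnit M.det)
    (hMC : M * C = C) : ∃ S : Matrix n n ℂ, S * S = M ∧ Sᵀ = S ∧ S * C = C := by
  have hroot0 : ¬M.charpoly.IsRoot 0 := fun h => by
    rw [IsRoot, ← coeff_zero_eq_eval_zero] at h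
    simp [det_eq_sign_charpoly_coeff, h] at hdet
  obtain ⟨q, ⟨g, hg⟩, hq⟩ := exists_sq_sub_X_dvd two_ne_zero hroot0 (· ^ (2⁻¹ : ℂ))
    fun a _ => by exact_mod_cast Complex.cpow_nat_inv_pow a two_ne_zero
  have hMC' : M * C = (1 : ℂ) • C := by rw [hMC, one_smul]
  refine ⟨aeval M q, ?_, by rw [transpose_aeval, hM], ?_⟩
  · rw [← pow_two, ← map_pow, eq_add_of_sub_eq hg, map_add, map_mul, aeval_self_charpoly,
      zero_mul, zero_add, aeval_X]
  · rw [aeval_mul_eq_eval_smul hMC']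
    by_cases h1 : M.charpoly.IsRoot 1
    · rw [hq 1 h1, Complex.one_cpow, one_smul]
    · have hC0 : M.charpoly.eval 1 • C = 0 := by
        rw [← aeval_mul_eq_eval_smul hMC', aeval_self_charpoly, zero_mul]
      rw [(smul_eq_zero.1 hC0).resolve_left h1, smul_zero]

theorem exists_orthogonal_conj_eq {P C : Matrix n n ℂ} (hP : IsUnit P) (hC : Cᵀ = -C)
    (hPC : Pᵀ * P * C = C) : ∃ U : Matrix n n ℂ, Uᵀ * U = 1 ∧ U * C * U⁻¹ = P * C * P⁻¹ := by
  have hPdet := (isUnit_iff_isUnit_det P).1 hP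
  obtain ⟨S, hSS, hST, hSC⟩ := exists_symm_sqrt_mul_eq_self (M := Pᵀ * P)
    (by rw [transpose_mul, transpose_transpose]) (by simpa using hPdet.mul hPdet) hPC
  have hSdet : IsUnit S.det := by
    refine isUnit_of_mul_isUnit_left (y := S.det) ?_
    rw [← det_mul, hSS, det_mul, det_transpose]
    exact hPdet.mul hPdet
  have hCS : C * S = C := by
    simpa [hST, hC] using congrArg transpose hSC
  refine ⟨P * S⁻¹, ?_, ?_⟩
  · rw [transpose_mul, transpose_nonsing_inv, hST, mul_assoc, ← mul_assoc Pᵀ, ← hSS,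
      mul_nonsing_inv_cancel_right _ _ hSdet, nonsing_inv_mul _ hSdet]
  · rw [mul_inv_rev, nonsing_inv_nonsing_inv _ hSdet, mul_assoc P, ← hSC,
      nonsing_inv_mul_cancel_left _ _ hSdet, hSC, mul_assoc, ← mul_assoc C, hCS, ← mul_assoc]

end Matrix

theorem skew_conjugation_criterion_general (n : ℕ)
    (C C' : Matrix (Fin n) (Fin n) ℂ) (hC : Cᵀ = -C) :
    (∃ (P : Matrix (Fin n) (Fin n) ℂ) (lam : ℂ), IsUnit P ∧ lam ≠ 0 ∧
        C' = lam • (P * C * P⁻¹) ∧ Pᵀ * P * C = C) ↔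
      (∃ (U : Matrix (Fin n) (Fin n) ℂ) (mu : ℂ), Uᵀ * U = 1 ∧ mu ≠ 0 ∧
        C' = mu • (U * C * U⁻¹)) := by
  constructor
  · rintro ⟨P, lam, hP, hlam, rfl, hPC⟩
    obtain ⟨U, hU, hUC⟩ := exists_orthogonal_conj_eq hP hC hPC
    exact ⟨U, lam, hU, hlam, by rw [hUC]⟩
  · rintro ⟨U, mu, hU, hmu, hC'⟩
    exact ⟨U, mu, (isUnit_iff_isUnit_det U).2 (isUnit_det_of_left_inverse hU), hmu, hC',
      by rw [hU, one_mul]⟩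

/-- For skew-symmetric complex matrices `C, C'`: there exist an
invertible `P` and a nonzero `λ` with `C' = λ • (P * C * P⁻¹)` and `Pᵀ * P * C = C`
if and only if there exist a complex orthogonal `U` and a nonzero `μ` with
`C' = μ • (U * C * U⁻¹)`. -/
theorem skew_conjugation_criterion (n : ℕ)
    (C C' : Matrix (Fin n) (Fin n) ℂ) (hC : Cᵀ = -C) (hC' : C'ᵀ = -C') :
    (∃ (P : Matrix (Fin n) (Fin n) ℂ) (lam : ℂ), IsUnit P ∧ lam ≠ 0 ∧
        C' = lam • (P * C * P⁻¹) ∧ Pᵀ * P * C = C) ↔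
      (∃ (U : Matrix (Fin n) (Fin n) ℂ) (mu : ℂ), Uᵀ * U = 1 ∧ mu ≠ 0 ∧
        C' = mu • (U * C * U⁻¹)) :=
  skew_conjugation_criterion_general n C C' hC
end

section
/- Let (g,B) be a reduced singular quadratic Lie algebra and let D : g → g be a B-symmetric linear map, i.e. B(D(x),y) = B(x,D(y)) for all x,y in g. Then D is a centromorphism, i.e. D([X,Y]) = [D(X),Y] = [X,D(Y)] for all X,Y in g, if and only if there exist μ in ℂ and a B-symmetric linear map Z : g → g whose image is contained in the center Z(g) and which vanishes on [g,g], such that D = μ·id + Z. Moreover, such a D is invertible if and only if μ ≠ 0. -/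
/-! Through `B`, the condition `α ∧ I = 0` on `α = B X₀` becomes the identity
`α(X) [Y,Z] - α(Y) [X,Z] + α(Z) [X,Y] = B([X,Y],Z) X₀`. Applying a centromorphism `D` to it and
subtracting the same identity at `D X` shows that `ker α ∩ ker (α ∘ D)` is central unless `X₀`
is an eigenvector of `D`. But in a quadratic Lie algebra the center is the orthogonal of `[g,g]`,
so a central subspace of codimension two forces `[g,g]` to be at most a line and then `g` to be
Abelian. Hence `D X₀ = μ X₀`, and the identity for `D - μ` shows that `D - μ` has central image,
so it also kills `[g,g]`. When the center is isotropic it lies in `[g,g]`, so `Z = D - μ`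
squares to zero and `D` is invertible exactly when `μ ≠ 0`. -/

open Module

namespace Submodule

variable {K V : Type*} [Field K] [AddCommGroup V] [Module K V] [FiniteDimensional K V]

theorem exists_sup_span_singleton_eq_top {C : Submodule K V}
    (h : finrank K V ≤ finrank K C + 1) : ∃ a : V, C ⊔ K ∙ a = ⊤ := by
  by_cases hC : C = ⊤
  · exact ⟨0, by simp [hC]⟩
  obtain ⟨a, ha⟩ := SetLike.exists_not_mem_of_ne_top C hC
  have hlt : finrank K C < finrank K ↥(C ⊔ K ∙ a) :=
    finrank_lt_finrank_of_lt (left_lt_sup.mpr fun h ↦ ha (h (mem_span_singleton_self a)))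
  exact ⟨a, eq_top_of_finrank_eq ((finrank_le _).antisymm (by omega))⟩

theorem exists_sup_span_singleton_sup_span_singleton_eq_top {C : Submodule K V}
    (h : finrank K V ≤ finrank K C + 2) : ∃ a b : V, C ⊔ K ∙ a ⊔ K ∙ b = ⊤ := by
  by_cases hC : C = ⊤
  · exact ⟨0, 0, by simp [hC]⟩
  obtain ⟨a, ha⟩ := SetLike.exists_not_mem_of_ne_top C hC
  have hlt : finrank K C < finrank K ↥(C ⊔ K ∙ a) :=
    finrank_lt_finrank_of_lt (left_lt_sup.mpr fun h ↦ ha (h (mem_span_singleton_self a)))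
  obtain ⟨b, hb⟩ := exists_sup_span_singleton_eq_top (C := C ⊔ K ∙ a) (by omega)
  exact ⟨a, b, hb⟩

end Submodule

theorem LinearMap.finrank_le_finrank_ker_inf_ker_add_two
    {K V : Type*} [Field K] [AddCommGroup V] [Module K V] [FiniteDimensional K V]
    (f g : Module.Dual K V) :
    finrank K V ≤ finrank K ↥(LinearMap.ker f ⊓ LinearMap.ker g) + 2 := by
  have hrange := Submodule.finrank_le (LinearMap.range (f.prod g))
  rw [← LinearMap.ker_prod, ← (f.prod g).finrank_range_add_finrank_ker]
  simp only [finrank_prod, finrank_self] at hrange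
  omega

namespace LieAlgebra

section CommRing

variable {R L : Type*} [CommRing R] [LieRing L] [LieAlgebra R L]

theorem lie_mem_derivedSeries_one_s16 (a b : L) : ⁅a, b⁆ ∈ derivedSeries R L 1 := by
  rw [← LieSubmodule.mem_toSubmodule, ← LieIdeal.toLieSubalgebra_toSubmodule,
    coe_derivedSeries_one_eq]
  exact Submodule.subset_span ⟨a, b, rfl⟩

theorem derivedSeries_one_le_iff {p : Submodule R L} :
    (derivedSeries R L 1 : Submodule R L) ≤ p ↔ ∀ a b : L, ⁅a, b⁆ ∈ p := by
  rw [coe_derivedSeries_one_eq, Submodule.span_le]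
  exact ⟨fun h a b ↦ h ⟨a, b, rfl⟩, by rintro h _ ⟨a, b, rfl⟩; exact h a b⟩

theorem lie_mem_span_of_sup_eq_top {C : Submodule R L} (hC : C ≤ (center R L : Submodule R L))
    {a b : L} (h : C ⊔ R ∙ a ⊔ R ∙ b = ⊤) (x y : L) : ⁅x, y⁆ ∈ R ∙ ⁅a, b⁆ := by
  have hdecomp (z : L) : ∃ c ∈ C, ∃ s t : R, z = c + s • a + t • b := by
    obtain ⟨_, hc', _, hb', rfl⟩ := Submodule.mem_sup.mp (h ▸ Submodule.mem_top (x := z))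
    obtain ⟨c, hc, _, ha', rfl⟩ := Submodule.mem_sup.mp hc'
    obtain ⟨s, rfl⟩ := Submodule.mem_span_singleton.mp ha'
    obtain ⟨t, rfl⟩ := Submodule.mem_span_singleton.mp hb'
    exact ⟨c, hc, s, t, rfl⟩
  have hcentral {c : L} (hc : c ∈ C) (z : L) : ⁅z, c⁆ = 0 :=
    (LieModule.mem_maxTrivSubmodule R L L c).mp (hC hc) z
  obtain ⟨c, hc, s, t, rfl⟩ := hdecomp x
  obtain ⟨c', hc', s', t', rfl⟩ := hdecomp y
  have hexpand : ⁅c + s • a + t • b, c' + s' • a + t' • b⁆ = (s * t' - t * s') • ⁅a, b⁆ := by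
    simp only [lie_add, add_lie, lie_smul, smul_lie, hcentral hc, hcentral hc', lie_self,
      ← lie_skew c, ← lie_skew b a]
    module
  exact hexpand ▸ Submodule.smul_mem _ _ (Submodule.mem_span_singleton_self _)

theorem apply_eq_zero_of_mem_derivedSeries_one {E : L →ₗ[R] L}
    (hE : ∀ x y : L, E ⁅x, y⁆ = ⁅E x, y⁆) (hcenter : ∀ x, E x ∈ center R L) {x : L}
    (hx : x ∈ derivedSeries R L 1) : E x = 0 := by
  have hle : (derivedSeries R L 1 : Submodule R L) ≤ LinearMap.ker E :=
    derivedSeries_one_le_iff.mpr fun a b ↦ by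
      rw [LinearMap.mem_ker, hE, ← lie_skew, neg_eq_zero]
      exact (LieModule.mem_maxTrivSubmodule R L L _).mp (hcenter a) b
  exact hle hx

def IsCentromorphism (D : L →ₗ[R] L) : Prop :=
  ∀ x y : L, D ⁅x, y⁆ = ⁅D x, y⁆ ∧ D ⁅x, y⁆ = ⁅x, D y⁆

theorem isCentromorphism_smul_id_add {Z : L →ₗ[R] L} (hcenter : ∀ x, Z x ∈ center R L)
    (hderived : ∀ x ∈ derivedSeries R L 1, Z x = 0) (μ : R) :
    IsCentromorphism (μ • LinearMap.id + Z) := by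
  intro x y
  have hZ (z : L) : ⁅z, Z y⁆ = 0 := (LieModule.mem_maxTrivSubmodule R L L _).mp (hcenter y) z
  have hZ' : ⁅Z x, y⁆ = 0 := by
    rw [← lie_skew, (LieModule.mem_maxTrivSubmodule R L L _).mp (hcenter x) y, neg_zero]
  simp [hderived _ (lie_mem_derivedSeries_one_s16 x y), hZ, hZ']

end CommRing

section Quadratic

variable {K L : Type*} [Field K] [LieRing L] [LieAlgebra K L] {B : LinearMap.BilinForm K L}

theorem orthogonal_derivedSeries_one (hinv : ∀ x y z : L, B ⁅x, y⁆ z = B x ⁅y, z⁆)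
    (hB : LinearMap.SeparatingRight B) :
    B.orthogonal (derivedSeries K L 1) = center K L := by
  ext x
  simp only [LinearMap.BilinForm.mem_orthogonal_iff, LieSubalgebra.mem_toSubmodule,
    LieIdeal.mem_toLieSubalgebra, LieModule.mem_maxTrivSubmodule]
  constructor
  · intro hx y
    exact hB _ fun a ↦ hinv a y x ▸ hx _ (lie_mem_derivedSeries_one_s16 a y)
  · intro hx n hn
    have hle : (derivedSeries K L 1 : Submodule K L) ≤ LinearMap.ker (B.flip x) :=
      derivedSeries_one_le_iff.mpr fun a b ↦ by simp [hinv, hx b]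
    exact hle hn

theorem center_le_derivedSeries_one [FiniteDimensional K L] (hsymm : ∀ x y : L, B x y = B y x)
    (hinv : ∀ x y z : L, B ⁅x, y⁆ z = B x ⁅y, z⁆) (hB : B.Nondegenerate)
    (hiso : ∀ x ∈ center K L, ∀ y ∈ center K L, B x y = 0) :
    center K L ≤ derivedSeries K L 1 := by
  intro x hx
  have hrefl : B.IsRefl := fun y z h ↦ (hsymm z y).trans h
  have : x ∈ B.orthogonal (B.orthogonal (derivedSeries K L 1)) := by
    rw [orthogonal_derivedSeries_one hinv hB.2]
    exact fun y hy ↦ hiso y hy x hx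
  rwa [B.orthogonal_orthogonal hB hrefl] at this

theorem isLieAbelian_of_finrank_le_finrank_add_two [FiniteDimensional K L]
    (hinv : ∀ x y z : L, B ⁅x, y⁆ z = B x ⁅y, z⁆) (hB : B.Nondegenerate) {C : Submodule K L}
    (hC : C ≤ (center K L : Submodule K L)) (h : finrank K L ≤ finrank K C + 2) :
    IsLieAbelian L := by
  obtain ⟨a, b, hab⟩ := Submodule.exists_sup_span_singleton_sup_span_singleton_eq_top h
  have hderived : finrank K (derivedSeries K L 1 : Submodule K L) ≤ 1 :=
    (Submodule.finrank_mono (derivedSeries_one_le_iff.mpr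
      (lie_mem_span_of_sup_eq_top hC hab))).trans ((finrank_span_le_card _).trans (by simp))
  have hcenter : finrank K L ≤ finrank K (center K L : Submodule K L) + 1 := by
    rw [← orthogonal_derivedSeries_one hinv hB.2, B.finrank_orthogonal hB]
    omega
  obtain ⟨c, hc⟩ := Submodule.exists_sup_span_singleton_eq_top hcenter
  refine ⟨fun x y ↦ ?_⟩
  simpa using lie_mem_span_of_sup_eq_top le_rfl (b := 0) (by simpa using hc) x y

end Quadratic

end LieAlgebra

theorem Module.End.bijective_smul_id_add_iff {K V : Type*} [Field K] [AddCommGroup V]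
    [Module K V] [Nontrivial V] {Z : Module.End K V} (hZ : IsNilpotent Z) (μ : K) :
    Function.Bijective (μ • LinearMap.id + Z : Module.End K V) ↔ μ ≠ 0 := by
  rw [← Module.End.isUnit_iff]
  constructor
  · rintro h rfl
    exact hZ.not_isUnit (by simpa using h)
  · intro hμ
    refine hZ.isUnit_add_left_of_commute ?_ ((Commute.one_right Z).smul_right μ)
    exact (IsUnit.mk0 μ hμ).map (algebraMap K (Module.End K V))

section Dup

variable {g : Type*} [LieRing g] [LieAlgebra ℂ g] {B : LinearMap.BilinForm ℂ g}

theorem exists_ne_zero_mem_dupSubmodule [FiniteDimensional ℂ g] (hB : B.Nondegenerate)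
    (h : 1 ≤ dup B) : ∃ X₀ : g, X₀ ≠ 0 ∧ B X₀ ∈ dupSubmodule B := by
  have : Nontrivial (dupSubmodule B) := finrank_pos_iff.mp h
  obtain ⟨⟨α, hα⟩, hne⟩ := exists_ne (0 : dupSubmodule B)
  refine ⟨(B.toDual hB).symm α, by simpa using hne, ?_⟩
  convert hα
  ext
  exact LinearMap.BilinForm.apply_toDual_symm_apply _ _

theorem lie_identity_of_mem_dupSubmodule (hB : LinearMap.SeparatingLeft B) {X₀ : g}
    (hX₀ : B X₀ ∈ dupSubmodule B) (X Y Z : g) :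
    B X₀ X • ⁅Y, Z⁆ - B X₀ Y • ⁅X, Z⁆ + B X₀ Z • ⁅X, Y⁆ = B ⁅X, Y⁆ Z • X₀ := by
  refine sub_eq_zero.mp (hB _ fun T ↦ ?_)
  simp only [map_sub, map_add, map_smul, LinearMap.sub_apply, LinearMap.add_apply,
    LinearMap.smul_apply, smul_eq_mul]
  linear_combination hX₀ X Y Z T

theorem centromorphism_lie_identity (hB : LinearMap.SeparatingLeft B) {X₀ : g}
    (hX₀ : B X₀ ∈ dupSubmodule B) {D : g →ₗ[ℂ] g} (hD : ∀ x y : g, D ⁅x, y⁆ = ⁅D x, y⁆)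
    (X Y Z : g) :
    B X₀ X • ⁅D Y, Z⁆ - B X₀ (D X) • ⁅Y, Z⁆ = B ⁅X, Y⁆ Z • D X₀ - B ⁅D X, Y⁆ Z • X₀ := by
  have hD_identity := congrArg D (lie_identity_of_mem_dupSubmodule hB hX₀ X Y Z)
  simp only [map_add, map_sub, map_smul, hD] at hD_identity
  linear_combination (norm := module)
    hD_identity - lie_identity_of_mem_dupSubmodule hB hX₀ (D X) Y Z

theorem mem_center_of_apply_eq_zero_of_forall_ne_smul (hB : LinearMap.SeparatingLeft B)
    {X₀ : g} (hX₀ : B X₀ ∈ dupSubmodule B) {D : g →ₗ[ℂ] g} (hD : ∀ x y : g, D ⁅x, y⁆ = ⁅D x, y⁆)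
    (hne : ∀ μ : ℂ, D X₀ ≠ μ • X₀) {X : g} (hX : B X₀ X = 0) (hDX : B X₀ (D X) = 0) :
    X ∈ LieAlgebra.center ℂ g := by
  refine (LieModule.mem_maxTrivSubmodule ℂ g g X).mpr fun Y ↦ ?_
  rw [← lie_skew, neg_eq_zero]
  refine hB _ fun Z ↦ by_contra fun hXYZ ↦ hne ((B ⁅X, Y⁆ Z)⁻¹ * B ⁅D X, Y⁆ Z) ?_
  have h := centromorphism_lie_identity hB hX₀ hD X Y Z
  rw [hX, hDX, zero_smul, zero_smul, sub_zero, eq_comm, sub_eq_zero] at h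
  rw [mul_smul, ← h, inv_smul_smul₀ hXYZ]

theorem exists_apply_eq_smul_of_mem_dupSubmodule [FiniteDimensional ℂ g]
    (hinv : ∀ x y z : g, B ⁅x, y⁆ z = B x ⁅y, z⁆) (hB : B.Nondegenerate)
    (hnonabelian : ¬ IsLieAbelian g) {X₀ : g} (hX₀ : B X₀ ∈ dupSubmodule B) {D : g →ₗ[ℂ] g}
    (hD : ∀ x y : g, D ⁅x, y⁆ = ⁅D x, y⁆) : ∃ μ : ℂ, D X₀ = μ • X₀ := by
  by_contra! hne
  refine hnonabelian (LieAlgebra.isLieAbelian_of_finrank_le_finrank_add_two hinv hB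
    (C := LinearMap.ker (B X₀) ⊓ LinearMap.ker (B X₀ ∘ₗ D)) (fun X hX ↦ ?_)
    (LinearMap.finrank_le_finrank_ker_inf_ker_add_two _ _))
  exact mem_center_of_apply_eq_zero_of_forall_ne_smul hB.1 hX₀ hD hne hX.1 hX.2

theorem apply_mem_center_of_apply_eq_zero (hB : LinearMap.SeparatingLeft B) {X₀ : g}
    (hX₀ : B X₀ ∈ dupSubmodule B) (hX₀ne : X₀ ≠ 0) {E : g →ₗ[ℂ] g}
    (hEsymm : ∀ x y : g, B (E x) y = B x (E y)) (hE : ∀ x y : g, E ⁅x, y⁆ = ⁅E x, y⁆)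
    (hEX₀ : E X₀ = 0) (x : g) : E x ∈ LieAlgebra.center ℂ g := by
  obtain ⟨X₁, hX₁⟩ : ∃ X₁, B X₀ X₁ ≠ 0 := by
    by_contra! h
    exact hX₀ne (hB X₀ h)
  have key (X Y Z : g) : B X₀ X • ⁅E Y, Z⁆ = -(B ⁅E X, Y⁆ Z • X₀) := by
    simpa [← hEsymm, hEX₀] using centromorphism_lie_identity hB hX₀ hE X Y Z
  have hEX₁ (Z : g) : ⁅E X₁, Z⁆ = 0 := by
    simpa [← hE, hX₁] using key X₁ X₁ Z
  refine (LieModule.mem_maxTrivSubmodule ℂ g g _).mpr fun Z ↦ ?_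
  rw [← lie_skew, neg_eq_zero]
  simpa [hEX₁, hX₁] using key X₁ x Z

end Dup

/-- Let `(g,B)` be a reduced singular quadratic Lie algebra and `D` a
`B`-symmetric linear map. Then `D` is a centromorphism if and only if `D = μ·id + Z` for
some `μ ∈ ℂ` and some `B`-symmetric `Z` with image in the center and vanishing on
`[g,g]`; moreover such a `D` is invertible if and only if `μ ≠ 0`. -/
theorem centromorphism_characterization
    {g : Type*} [LieRing g] [LieAlgebra ℂ g] [Module.Finite ℂ g]
    (B : LinearMap.BilinForm ℂ g)
    (hsymm : ∀ x y : g, B x y = B y x)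
    (hnondeg : B.Nondegenerate)
    (hinv : ∀ x y z : g, B ⁅x, y⁆ z = B x ⁅y, z⁆)
    (hnonabelian : ¬ ∀ x y : g, ⁅x, y⁆ = 0)
    (hsingular : 1 ≤ dup B)
    (hreduced : ∀ x ∈ LieAlgebra.center ℂ g, ∀ y ∈ LieAlgebra.center ℂ g, B x y = 0)
    [Nontrivial g]
    (D : g →ₗ[ℂ] g)
    (hDsymm : ∀ x y : g, B (D x) y = B x (D y)) :
    ((∀ X Y : g, D ⁅X, Y⁆ = ⁅D X, Y⁆ ∧ D ⁅X, Y⁆ = ⁅X, D Y⁆) ↔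
      ∃ (mu : ℂ) (Z : g →ₗ[ℂ] g),
        (∀ x y : g, B (Z x) y = B x (Z y)) ∧
        (∀ x : g, Z x ∈ LieAlgebra.center ℂ g) ∧
        (∀ x ∈ LieAlgebra.derivedSeries ℂ g 1, Z x = 0) ∧
        D = mu • LinearMap.id + Z) ∧
    (∀ (mu : ℂ) (Z : g →ₗ[ℂ] g),
        (∀ x y : g, B (Z x) y = B x (Z y)) →
        (∀ x : g, Z x ∈ LieAlgebra.center ℂ g) →
        (∀ x ∈ LieAlgebra.derivedSeries ℂ g 1, Z x = 0) →
        D = mu • LinearMap.id + Z →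
        (Function.Bijective D ↔ mu ≠ 0)) := by
  refine ⟨⟨fun hD ↦ ?_, ?_⟩, ?_⟩
  · obtain ⟨X₀, hX₀ne, hX₀⟩ := exists_ne_zero_mem_dupSubmodule hnondeg hsingular
    obtain ⟨μ, hμ⟩ := exists_apply_eq_smul_of_mem_dupSubmodule hinv hnondeg
      (fun _ ↦ hnonabelian (trivial_lie_zero g g)) hX₀ fun x y ↦ (hD x y).1
    set E := D - μ • LinearMap.id
    have hEsymm (x y : g) : B (E x) y = B x (E y) := by simp [E, hDsymm]
    have hE (x y : g) : E ⁅x, y⁆ = ⁅E x, y⁆ := by simp [E, (hD x y).1, sub_lie]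
    have hEcenter := apply_mem_center_of_apply_eq_zero hnondeg.1 hX₀ hX₀ne hEsymm hE
      (by simp [E, hμ])
    exact ⟨μ, E, hEsymm, hEcenter,
      fun x ↦ LieAlgebra.apply_eq_zero_of_mem_derivedSeries_one hE hEcenter, by simp [E]⟩
  · rintro ⟨μ, Z, -, hZc, hZd, rfl⟩
    exact LieAlgebra.isCentromorphism_smul_id_add hZc hZd μ
  · rintro μ Z - hZc hZd rfl
    refine Module.End.bijective_smul_id_add_iff ⟨2, LinearMap.ext fun x ↦ hZd _ ?_⟩ μ
    exact LieAlgebra.center_le_derivedSeries_one hsymm hinv hnondeg hreduced (hZc x)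
end

section
/- Let (g,B) and (g',B') be non-Abelian quadratic Lie algebras. If g and g' are isomorphic as complex Lie algebras, then dup(g) = dup(g'). -/
/-!
Pulling `B'` back along the isomorphism gives two invariant forms `B`, `B'` on the same Lie
algebra. Nondegeneracy of `B` yields an operator `D` with `B' x y = B (D x) y`; it is invertible
because `B'` is nondegenerate, lies in the centroid because both forms are invariant, and is
`B`-self-adjoint because both are symmetric. Newton's method, started at a polynomial that
interpolates cube roots of the eigenvalues, produces a cube root `R` of `D` that is a polynomial
in `D` and so inherits these properties. Then `B' ⁅x, y⁆ z = B ⁅R x, R y⁆ (R z)`: the canonical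
3-forms differ by the automorphism `R`, which therefore identifies the two spaces of `α` with
`α ∧ I = 0`.
-/

open Polynomial
open LinearMap (BilinForm IsAdjointPair)

theorem exists_pow_eq_of_isNilpotent_pow_sub {S : Type*} [CommRing S] {n : ℕ}
    (hn : IsUnit (n : S)) {a x : S} (hx : IsUnit x) (h : IsNilpotent (x ^ n - a)) :
    ∃ r, r ^ n = a := by
  have hderiv : aeval x (derivative (X ^ n - C a)) = n * x ^ (n - 1) := by
    simp [derivative_X_pow]
  obtain ⟨r, ⟨-, hr⟩, -⟩ := existsUnique_nilpotent_sub_and_aeval_eq_zero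
    (P := X ^ n - C a) (x := x) (by simpa using h) (hderiv ▸ hn.mul (hx.pow (n - 1)))
  exact ⟨r, by simpa [sub_eq_zero] using hr⟩

theorem isNilpotent_aeval_of_isRoot_of_mem_roots_minpoly {K A : Type*} [Field K] [IsAlgClosed K]
    [Ring A] [Algebra K A] {a : A} (ha : IsIntegral K a) {p : K[X]}
    (hp : ∀ μ ∈ (minpoly K a).roots, p.IsRoot μ) : IsNilpotent (aeval a p) := by
  refine ⟨Multiset.card (minpoly K a).roots, ?_⟩
  rw [← map_pow, ← minpoly.dvd_iff]
  calc minpoly K a = ((minpoly K a).roots.map (X - C ·)).prod :=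
        (IsAlgClosed.splits _).eq_prod_roots_of_monic (minpoly.monic ha)
  _ ∣ ((minpoly K a).roots.map fun _ => p).prod :=
        Multiset.prod_dvd_prod_of_dvd _ _ fun μ hμ => dvd_iff_isRoot.mpr (hp μ hμ)
  _ = p ^ Multiset.card (minpoly K a).roots := by simp

theorem exists_mem_adjoin_pow_eq {K A : Type*} [Field K] [IsAlgClosed K] [Ring A] [Algebra K A]
    {a : A} (hai : IsIntegral K a) (ha : IsUnit a) {n : ℕ} (hn : (n : K) ≠ 0) :
    ∃ r ∈ Algebra.adjoin K {a}, r ^ n = a := by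
  classical
  set S := Algebra.adjoin K {a}
  let b : S := ⟨a, Algebra.self_mem_adjoin_singleton K a⟩
  have : Module.Finite K S := Algebra.finite_adjoin_simple_of_isIntegral hai
  have : IsArtinianRing S := isArtinian_of_tower K inferInstance
  have hb : IsUnit b := IsArtinianRing.isUnit_of_mem_nonZeroDivisors
    (comap_nonZeroDivisors_le_of_injective (f := S.val) Subtype.val_injective
      ha.mem_nonZeroDivisors)
  have hn0 : n ≠ 0 := by rintro rfl; simp at hn
  choose root hroot using fun μ : K => IsAlgClosed.exists_pow_nat_eq μ (Nat.pos_of_ne_zero hn0)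
  let q := Lagrange.interpolate (minpoly K a).roots.toFinset id root
  have hq : ∀ μ ∈ (minpoly K b).roots, (q ^ n - X).IsRoot μ := by
    intro μ hμ
    rw [← minpoly.algHom_eq S.val Subtype.val_injective b] at hμ
    have hqμ : q.eval μ = root μ :=
      Lagrange.eval_interpolate_at_node root (Set.injOn_id _) (Multiset.mem_toFinset.mpr hμ)
    simp [hqμ, hroot]
  have hnil : IsNilpotent (aeval b q ^ n - b) := by
    simpa using isNilpotent_aeval_of_isRoot_of_mem_roots_minpoly (IsIntegral.of_finite K b) hq
  have hqn : IsUnit (aeval b q ^ n) := by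
    simpa using hnil.isUnit_add_right_of_commute hb (Commute.all _ _)
  obtain ⟨r, hr⟩ := exists_pow_eq_of_isNilpotent_pow_sub
    (by simpa using (Ne.isUnit hn).map (algebraMap K S)) ((isUnit_pow_iff hn0).mp hqn) hnil
  exact ⟨r, r.2, congrArg Subtype.val hr⟩

theorem isAdjointPair_of_mem_adjoin {R M : Type*} [CommRing R] [AddCommGroup M] [Module R M]
    {B : BilinForm R M} {f r : Module.End R M} (hf : IsAdjointPair B B f f)
    (hr : r ∈ Algebra.adjoin R {f}) : IsAdjointPair B B r r := by
  induction hr using Algebra.adjoin_induction with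
  | mem x hx => rwa [Set.mem_singleton_iff.mp hx]
  | algebraMap c => simpa [Algebra.algebraMap_eq_smul_one] using LinearMap.isAdjointPair_one.smul c
  | add x y _ _ hx hy => exact hx.add hy
  | mul x y hx_mem hy_mem hx hy =>
    have hxy : Commute x y := Algebra.commute_of_mem_adjoin_singleton_of_commute hy_mem
      (Algebra.commute_of_mem_adjoin_self hx_mem).symm
    simpa [hxy.eq] using hx.mul hy

namespace LieAlgebra

variable (R L : Type*) [CommRing R] [LieRing L] [LieAlgebra R L]

def centroid : Subalgebra R (Module.End R L) where
  carrier := {f | ∀ x y, f ⁅x, y⁆ = ⁅f x, y⁆}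
  mul_mem' {f g} (hf : ∀ x y, f ⁅x, y⁆ = ⁅f x, y⁆) (hg : ∀ x y, g ⁅x, y⁆ = ⁅g x, y⁆) x y := by
    simp only [Module.End.mul_apply, hf, hg]
  add_mem' {f g} (hf : ∀ x y, f ⁅x, y⁆ = ⁅f x, y⁆) (hg : ∀ x y, g ⁅x, y⁆ = ⁅g x, y⁆) x y := by
    simp only [LinearMap.add_apply, hf, hg, add_lie]
  algebraMap_mem' c x y := by simp [Algebra.algebraMap_eq_smul_one]

variable {R L}

theorem apply_lie_eq_lie_apply_right {f : Module.End R L} (hf : f ∈ centroid R L) (x y : L) :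
    f ⁅x, y⁆ = ⁅x, f y⁆ := by
  rw [← lie_skew, map_neg, hf, lie_skew]

theorem lie_apply_apply {f : Module.End R L} (hf : f ∈ centroid R L) (x y : L) :
    ⁅f x, f y⁆ = (f ^ 2) ⁅x, y⁆ := by
  rw [pow_two, Module.End.mul_apply, apply_lie_eq_lie_apply_right hf, hf]

end LieAlgebra

open LieAlgebra

section Dup

variable {g g' : Type*} [LieRing g] [LieAlgebra ℂ g] [LieRing g'] [LieAlgebra ℂ g']

theorem comp_mem_dupSubmodule {B : BilinForm ℂ g} {B' : BilinForm ℂ g'} (f : g →ₗ[ℂ] g')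
    (hf : ∀ x y z, B ⁅x, y⁆ z = B' ⁅f x, f y⁆ (f z)) {α : Module.Dual ℂ g'}
    (hα : α ∈ dupSubmodule B') : α ∘ₗ f ∈ dupSubmodule B := fun X Y Z T => by
  simpa only [LinearMap.comp_apply, hf] using hα (f X) (f Y) (f Z) (f T)

theorem dup_le_of_linearEquiv [Module.Finite ℂ g] {B : BilinForm ℂ g} {B' : BilinForm ℂ g'}
    (e : g ≃ₗ[ℂ] g') (he : ∀ x y z, B ⁅x, y⁆ z = B' ⁅e x, e y⁆ (e z)) : dup B' ≤ dup B := by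
  rw [dup, ← e.dualMap.finrank_map_eq]
  refine Submodule.finrank_mono ?_
  rintro _ ⟨α, hα, rfl⟩
  exact comp_mem_dupSubmodule e.toLinearMap he hα

theorem dup_eq_of_linearEquiv [Module.Finite ℂ g] [Module.Finite ℂ g'] {B : BilinForm ℂ g}
    {B' : BilinForm ℂ g'} (e : g ≃ₗ[ℂ] g') (he : ∀ x y z, B ⁅x, y⁆ z = B' ⁅e x, e y⁆ (e z)) :
    dup B = dup B' :=
  le_antisymm (dup_le_of_linearEquiv e.symm fun x y z => by
    simpa using (he (e.symm x) (e.symm y) (e.symm z)).symm) (dup_le_of_linearEquiv e he)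

theorem dup_eq_of_invariant_of_nondegenerate [Module.Finite ℂ g] {B B' : BilinForm ℂ g}
    (hsymm : ∀ x y, B x y = B y x) (hnondeg : B.Nondegenerate)
    (hinv : ∀ x y z, B ⁅x, y⁆ z = B x ⁅y, z⁆)
    (hsymm' : ∀ x y, B' x y = B' y x) (hnondeg' : B'.Nondegenerate)
    (hinv' : ∀ x y z, B' ⁅x, y⁆ z = B' x ⁅y, z⁆) :
    dup B = dup B' := by
  have hB_ext : ∀ u v : g, (∀ w, B u w = B v w) → u = v := fun u v h =>
    (B.toDual hnondeg).injective (LinearMap.ext fun w => by simpa [B.toDual_def] using h w)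
  set D := B'.symmCompOfNondegenerate B hnondeg
  have hD : ∀ x y, B (D x) y = B' x y := fun x y =>
    B'.symmCompOfNondegenerate_left_apply hnondeg y x
  have hD_unit : IsUnit D := (LinearMap.isUnit_iff_ker_eq_bot D).mpr <|
    LinearMap.ker_eq_bot'.mpr fun x hx => hnondeg'.1 x fun y => by
      rw [← hD, hx, map_zero, LinearMap.zero_apply]
  have hD_centroid : D ∈ centroid ℂ g := fun x y =>
    hB_ext _ _ fun w => by rw [hD, hinv', ← hD, hinv]
  have hD_adjoint : IsAdjointPair B B D D := fun x y => by rw [hD, hsymm', ← hD, hsymm]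
  obtain ⟨R, hR_mem, hR_cube⟩ := exists_mem_adjoin_pow_eq (Algebra.IsIntegral.isIntegral (R := ℂ) D)
    hD_unit (n := 3) (Nat.cast_ne_zero.mpr three_ne_zero)
  have hR_centroid : R ∈ centroid ℂ g :=
    Algebra.adjoin_le (Set.singleton_subset_iff.mpr hD_centroid) hR_mem
  have hR_adjoint : IsAdjointPair B B R R := isAdjointPair_of_mem_adjoin hD_adjoint hR_mem
  have hR_bij : Function.Bijective R :=
    (Module.End.isUnit_iff R).mp ((isUnit_pow_iff three_ne_zero).mp (hR_cube ▸ hD_unit))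
  refine (dup_eq_of_linearEquiv (LinearEquiv.ofBijective R hR_bij) fun x y z => ?_).symm
  calc B' ⁅x, y⁆ z = B ((R ^ 3) ⁅x, y⁆) z := by rw [hR_cube, hD]
    _ = B ((R ^ 2) ⁅x, y⁆) (R z) := by rw [pow_succ', Module.End.mul_apply, hR_adjoint]
    _ = B ⁅R x, R y⁆ (R z) := by rw [lie_apply_apply hR_centroid]

end Dup

theorem dup_invariant_under_isomorphism_general
    {g g' : Type*} [LieRing g] [LieAlgebra ℂ g] [Module.Finite ℂ g]
    [LieRing g'] [LieAlgebra ℂ g'] [Module.Finite ℂ g']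
    (B : LinearMap.BilinForm ℂ g) (B' : LinearMap.BilinForm ℂ g')
    (hsymm : ∀ x y : g, B x y = B y x)
    (hnondeg : B.Nondegenerate)
    (hinv : ∀ x y z : g, B ⁅x, y⁆ z = B x ⁅y, z⁆)
    (hsymm' : ∀ x y : g', B' x y = B' y x)
    (hnondeg' : B'.Nondegenerate)
    (hinv' : ∀ x y z : g', B' ⁅x, y⁆ z = B' x ⁅y, z⁆)
    (hiso : Nonempty (g ≃ₗ⁅ℂ⁆ g')) :
    dup B = dup B' := by
  obtain ⟨e⟩ := hiso
  set B₂ := BilinForm.congr e.toLinearEquiv.symm B'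
  have hB₂ : ∀ x y, B₂ x y = B' (e x) (e y) := fun x y => by simp [B₂]
  calc dup B = dup B₂ :=
        dup_eq_of_invariant_of_nondegenerate hsymm hnondeg hinv
          (fun x y => by rw [hB₂, hB₂, hsymm'])
          ((BilinForm.nondegenerate_congr_iff _).mpr hnondeg')
          (fun x y z => by rw [hB₂, hB₂, LieEquiv.map_lie, LieEquiv.map_lie, hinv'])
    _ = dup B' := dup_eq_of_linearEquiv e.toLinearEquiv fun x y z => by
        rw [hB₂, LieEquiv.coe_toLinearEquiv, LieEquiv.map_lie]

/-- The dup-number is invariant under Lie algebra isomorphism: if two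
non-Abelian quadratic Lie algebras `(g,B)` and `(g',B')` are isomorphic as complex Lie
algebras, then `dup(g) = dup(g')`. -/
theorem dup_invariant_under_isomorphism
    {g g' : Type*} [LieRing g] [LieAlgebra ℂ g] [Module.Finite ℂ g]
    [LieRing g'] [LieAlgebra ℂ g'] [Module.Finite ℂ g']
    (B : LinearMap.BilinForm ℂ g) (B' : LinearMap.BilinForm ℂ g')
    (hsymm : ∀ x y : g, B x y = B y x)
    (hnondeg : B.Nondegenerate)
    (hinv : ∀ x y z : g, B ⁅x, y⁆ z = B x ⁅y, z⁆)
    (hsymm' : ∀ x y : g', B' x y = B' y x)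
    (hnondeg' : B'.Nondegenerate)
    (hinv' : ∀ x y z : g', B' ⁅x, y⁆ z = B' x ⁅y, z⁆)
    (hnonabelian : ¬ ∀ x y : g, ⁅x, y⁆ = 0)
    (hnonabelian' : ¬ ∀ x y : g', ⁅x, y⁆ = 0)
    (hiso : Nonempty (g ≃ₗ⁅ℂ⁆ g')) :
    dup B = dup B' :=
  dup_invariant_under_isomorphism_general B B' hsymm hnondeg hinv hsymm' hnondeg' hinv' hiso
end
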